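/- arXiv:2405.04762 — 4 statements merged into one kernel-verified Lean document; each statement's English description precedes it below -/
import Mathlib

section
/- Let Δ ≥ 12 be a real number. If a simple graph G = (V, E) on n vertices is (n/5, Δ/15)-edge-sparse, then for every vertex v ∈ V, every integer γ ≥ 1, and every set S that is a (γ, Δ/3)-dense-neighborhood for v, the set S has at least min{2^γ, n/10} vertices. -/
/-- The number of edges of `G` with both endpoints in `X`. -/
noncomputable def internalEdgeCount {V : Type*} (G : SimpleGraph V) (X : Finset V) : ℕ :=
  {e : Sym2 V | e ∈ G.edgeSet ∧ ∀ v ∈ e, v ∈ X}.ncard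

/-- A graph is `(ℓ, α)`-edge-sparse if every set `X` of at most `ℓ` vertices
spans at most `α * |X|` internal edges. -/
def EdgeSparse {V : Type*} (G : SimpleGraph V) (ℓ α : ℝ) : Prop :=
  ∀ X : Finset V, (X.card : ℝ) ≤ ℓ → (internalEdgeCount G X : ℝ) ≤ α * X.card

/-- `N^d_G(v)`: the set of vertices at graph distance at most `d` from `v`. -/
def distBall {V : Type*} (G : SimpleGraph V) (v : V) (d : ℕ) : Set V :=
  {u | ∃ p : G.Walk v u, p.length ≤ d}

/-- `S` is a `(γ, δ)`-dense-neighborhood for `v` if `S ⊆ N^γ_G(v)`, `v ∈ S`,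
and every vertex of `S ∩ N^{γ-1}_G(v)` has at least `δ` neighbors in `S`. -/
def DenseNbhd {V : Type*} (G : SimpleGraph V) (v : V) (γ : ℕ) (δ : ℝ) (S : Set V) : Prop :=
  S ⊆ distBall G v γ ∧ v ∈ S ∧
    ∀ u ∈ S ∩ distBall G v (γ - 1), δ ≤ ((G.neighborSet u ∩ S).ncard : ℝ)

lemma mem_distBall_self {V : Type*} (G : SimpleGraph V) (v : V) (d : ℕ) :
    v ∈ distBall G v d := ⟨SimpleGraph.Walk.nil, by simp⟩

lemma distBall_mono {V : Type*} (G : SimpleGraph V) (v : V) {d d' : ℕ} (h : d ≤ d') :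
    distBall G v d ⊆ distBall G v d' := fun _ ⟨p, hp⟩ => ⟨p, hp.trans h⟩

lemma adj_mem_distBall {V : Type*} {G : SimpleGraph V} {v u w : V} {d : ℕ}
    (hu : u ∈ distBall G v d) (h : G.Adj u w) : w ∈ distBall G v (d + 1) := by
  obtain ⟨p, hp⟩ := hu
  exact ⟨p.concat h, by rw [SimpleGraph.Walk.length_concat]; omega⟩

/-- Double counting: if every vertex of `A ⊆ X` has at least `δ` neighbors in `X`,
then `δ * |A| ≤ 2 * e(X)`. -/
lemma count_lemma {V : Type*} [Fintype V] (G : SimpleGraph V)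
    (A X : Set V) (hAX : A ⊆ X) (δ : ℝ)
    (hδ : ∀ u ∈ A, δ ≤ ((G.neighborSet u ∩ X).ncard : ℝ)) :
    δ * A.ncard ≤ 2 * (internalEdgeCount G (Set.toFinite X).toFinset : ℝ) := by
  classical
  set Xf := (Set.toFinite X).toFinset with hXf
  set Af := (Set.toFinite A).toFinset with hAf
  set E := (Set.toFinite {e : Sym2 V | e ∈ G.edgeSet ∧ ∀ v ∈ e, v ∈ Xf}).toFinset with hE
  have hEcard : internalEdgeCount G Xf = E.card := by
    rw [internalEdgeCount, Set.ncard_eq_toFinset_card _ (Set.toFinite _)]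
  set P : Finset (V × V) :=
    Finset.univ.filter (fun p => p.1 ∈ A ∧ p.2 ∈ X ∧ G.Adj p.1 p.2) with hP
  -- each fiber over `u ∈ A` is the set of neighbors of `u` in `X`
  have hfiber : ∀ u ∈ Af, ((P.filter (fun p => p.1 = u)).card : ℝ)
      = ((G.neighborSet u ∩ X).ncard : ℝ) := by
    intro u hu
    rw [Set.ncard_eq_toFinset_card _ (Set.toFinite _)]
    congr 1
    have huA : u ∈ A := (Set.Finite.mem_toFinset _).mp hu
    have : P.filter (fun p => p.1 = u)
        = ((Set.toFinite (G.neighborSet u ∩ X)).toFinset).image (fun w => (u, w)) := by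
      ext ⟨a, b⟩
      simp only [hP, Finset.mem_filter, Finset.mem_univ, true_and, Finset.mem_image,
        Set.Finite.mem_toFinset, Set.mem_inter_iff, SimpleGraph.mem_neighborSet,
        Prod.mk.injEq]
      constructor
      · rintro ⟨⟨ha, hb, hadj⟩, rfl⟩
        exact ⟨b, ⟨hadj, hb⟩, rfl, rfl⟩
      · rintro ⟨w, ⟨hadj, hw⟩, rfl, rfl⟩
        exact ⟨⟨huA, hw, hadj⟩, rfl⟩
    rw [this, Finset.card_image_of_injective _ (fun a b h => (Prod.mk.injEq _ _ _ _).mp h |>.2)]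
  -- lower bound on `|P|`
  have hsum : (P.card : ℝ) = ∑ u ∈ Af, ((P.filter (fun p => p.1 = u)).card : ℝ) := by
    rw [← Nat.cast_sum]
    norm_cast
    apply Finset.card_eq_sum_card_fiberwise
    intro p hp
    rw [hP] at hp
    simp only [Finset.mem_coe, Finset.mem_filter] at hp
    exact (Set.Finite.mem_toFinset _).mpr hp.2.1
  have hlow : δ * A.ncard ≤ (P.card : ℝ) := by
    rw [hsum, Set.ncard_eq_toFinset_card _ (Set.toFinite _), ← hAf]
    calc δ * Af.card = ∑ _u ∈ Af, δ := by rw [Finset.sum_const, nsmul_eq_mul]; ring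
      _ ≤ _ := Finset.sum_le_sum (fun u hu => by
          rw [hfiber u hu]; exact hδ u ((Set.Finite.mem_toFinset _).mp hu))
  -- upper bound on `|P|`: map to edges, at most 2-to-1
  have hup : P.card ≤ 2 * E.card := by
    apply Finset.card_le_mul_card_image_of_maps_to (f := fun p => s(p.1, p.2))
    · intro p hp
      rw [hP] at hp
      simp only [Finset.mem_filter] at hp
      obtain ⟨-, ha, hb, hadj⟩ := hp
      rw [hE, Set.Finite.mem_toFinset]
      refine ⟨hadj, ?_⟩
      intro z hz
      rw [Sym2.mem_iff] at hz
      rcases hz with rfl | rfl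
      · exact (Set.Finite.mem_toFinset _).mpr (hAX ha)
      · exact (Set.Finite.mem_toFinset _).mpr hb
    · intro e he
      induction e with
      | h x y =>
        calc (P.filter (fun p => s(p.1, p.2) = s(x, y))).card
            ≤ ({(x, y), (y, x)} : Finset (V × V)).card := by
              apply Finset.card_le_card
              intro p hp
              simp only [Finset.mem_filter] at hp
              have := Sym2.eq_iff.mp hp.2
              simp only [Finset.mem_insert, Finset.mem_singleton, Prod.ext_iff]
              tauto
          _ ≤ 2 := (Finset.card_insert_le _ _).trans (by simp)
  calc δ * A.ncard ≤ (P.card : ℝ) := hlow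
    _ ≤ 2 * (E.card : ℝ) := by exact_mod_cast hup
    _ = 2 * (internalEdgeCount G Xf : ℝ) := by rw [hEcard]

/-- If a graph on `n` vertices is `(n/5, Δ/15)`-edge-sparse (with `Δ ≥ 12`),
then every `(γ, Δ/3)`-dense-neighborhood for a vertex `v` (for `γ ≥ 1`) has at
least `min {2^γ, n/10}` vertices. -/
theorem statement5 {V : Type*} [Fintype V] (n : ℕ) (hV : Fintype.card V = n)
    (Δ : ℝ) (hΔ : 12 ≤ Δ) (G : SimpleGraph V)
    (hsparse : EdgeSparse G ((n : ℝ) / 5) (Δ / 15)) :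
    ∀ v : V, ∀ γ : ℕ, 1 ≤ γ → ∀ S : Set V, DenseNbhd G v γ (Δ / 3) S →
      min ((2 : ℝ) ^ γ) ((n : ℝ) / 10) ≤ (S.ncard : ℝ) := by
  intro v γ hγ S hS
  obtain ⟨hSb, hvS, hdense⟩ := hS
  by_cases hbig : (n : ℝ) / 10 ≤ (S.ncard : ℝ)
  · exact le_trans (min_le_right _ _) hbig
  push_neg at hbig
  have key : ∀ i, i ≤ γ → (2 : ℝ) ^ i ≤ ((S ∩ distBall G v i).ncard : ℝ) := by
    intro i
    induction i with
    | zero =>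
      intro _
      have hmem : v ∈ S ∩ distBall G v 0 := ⟨hvS, mem_distBall_self G v 0⟩
      have : 1 ≤ (S ∩ distBall G v 0).ncard :=
        (Set.ncard_pos (Set.toFinite _)).mpr ⟨v, hmem⟩
      simpa using (by exact_mod_cast this : (1 : ℝ) ≤ ((S ∩ distBall G v 0).ncard : ℝ))
    | succ i ih =>
      intro hiγ
      have hi := ih (by omega)
      set SA := S ∩ distBall G v i with hSA
      set SX := S ∩ distBall G v (i + 1) with hSX
      have hAX : SA ⊆ SX :=
        Set.inter_subset_inter_right _ (distBall_mono G v (by omega))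
      have hdeg : ∀ u ∈ SA, Δ / 3 ≤ ((G.neighborSet u ∩ SX).ncard : ℝ) := by
        intro u hu
        have hu' : u ∈ S ∩ distBall G v (γ - 1) :=
          ⟨hu.1, distBall_mono G v (by omega) hu.2⟩
        have h1 := hdense u hu'
        refine h1.trans ?_
        have hsub : G.neighborSet u ∩ S ⊆ G.neighborSet u ∩ SX := by
          rintro w ⟨hw1, hw2⟩
          exact ⟨hw1, hw2, adj_mem_distBall hu.2 hw1⟩
        exact_mod_cast Set.ncard_le_ncard hsub (Set.toFinite _)
      have hcount := count_lemma G SA SX hAX (Δ / 3) hdeg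
      have hXcard : (((Set.toFinite SX).toFinset.card : ℝ)) = (SX.ncard : ℝ) := by
        rw [Set.ncard_eq_toFinset_card _ (Set.toFinite SX)]
      have hXS : (SX.ncard : ℝ) ≤ (S.ncard : ℝ) := by
        exact_mod_cast Set.ncard_le_ncard Set.inter_subset_left (Set.toFinite _)
      have hsp := hsparse (Set.toFinite SX).toFinset (by
        rw [hXcard]; linarith)
      have hx0 : (0 : ℝ) ≤ (SX.ncard : ℝ) := Nat.cast_nonneg _
      have hΔ0 : (0 : ℝ) < Δ := by linarith
      have hfin : Δ * ((SA.ncard : ℝ) / 3) ≤ Δ * (2 * (SX.ncard : ℝ) / 15) := by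
        rw [hXcard] at hsp
        nlinarith [hcount, hsp]
      have h13 : ((SA.ncard : ℝ) / 3) ≤ 2 * (SX.ncard : ℝ) / 15 :=
        (mul_le_mul_iff_right₀ hΔ0).mp hfin
      have : (2 : ℝ) ^ i ≤ (SA.ncard : ℝ) := hi
      rw [pow_succ]
      linarith
  have hfin := key γ le_rfl
  rw [Set.inter_eq_self_of_subset_left hSb] at hfin
  exact le_trans (min_le_left _ _) hfin
end

section
/- Consider the one-round coin-flipping game with k ≥ 0 players, independent value distributions X₁, …, X_k, and a fixed measurable outcome function f. For every real α with 0 < α ≤ 1/2 there exists a value v ∈ {0,1} such that, with probability at least 1 − α over the players' independent draws, the drawn sequence can be biased towards v within budget 8·√(k·ln(α⁻¹)). -/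
open MeasureTheory
open scoped ENNReal

/-- The natural measurable-space structure on `Option α`: a set is measurable
iff its preimage under `some` is measurable (the point `⊥ = none` is
measurable). -/
instance optionMeasurableSpace {α : Type*} [m : MeasurableSpace α] :
    MeasurableSpace (Option α) :=
  m.map some

/-- In the one-round coin-flipping game with outcome function `f`, the drawn
sequence `y` can be biased towards `v` within budget `m` if replacing at most
`m` coordinates of `y` by `⊥` (i.e. `none`) yields `y'` with `f y' = v`. -/
def CanBias {k : ℕ} {Ω : Fin k → Type*} (f : (∀ i, Option (Ω i)) → Bool)
    (y : ∀ i, Ω i) (m : ℝ) (v : Bool) : Prop :=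
  ∃ y' : ∀ i, Option (Ω i),
    (∀ i, y' i = some (y i) ∨ y' i = none) ∧
    (({i | y' i = none} : Set (Fin k)).ncard : ℝ) ≤ m ∧
    f y' = v



/-- `e^x ≤ x + e^{x²}` for all real `x`. -/
lemma exp_le_add_exp_sq (x : ℝ) : Real.exp x ≤ x + Real.exp (x ^ 2) := by
  rcases le_total x 0 with hx | hx
  · -- x ≤ 0 : e^x ≤ 1/(1-x) ≤ x + e^{x²}
    have h1 : Real.exp x ≤ 1 / (1 - x) := by
      rw [le_div_iff₀ (by linarith)]
      have := Real.add_one_le_exp (-x)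
      calc Real.exp x * (1 - x) ≤ Real.exp x * Real.exp (-x) := by
            nlinarith [Real.exp_pos x]
        _ = 1 := by rw [← Real.exp_add]; simp
    have h2 : (1 : ℝ) + x ^ 2 ≤ Real.exp (x ^ 2) := by
      have := Real.add_one_le_exp (x ^ 2); linarith
    have h3 : 1 / (1 - x) ≤ x + 1 + x ^ 2 := by
      rw [div_le_iff₀ (by linarith)]; nlinarith
    linarith
  · rcases le_total x 1 with hx1 | hx1
    · -- 0 ≤ x ≤ 1 : exp_bound with n = 2
      have hb := Real.exp_bound' hx hx1 (n := 2) (by norm_num)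
      simp [Finset.sum_range_succ, Nat.factorial] at hb
      have h2 : (1 : ℝ) + x ^ 2 ≤ Real.exp (x ^ 2) := by
        have := Real.add_one_le_exp (x ^ 2); linarith
      nlinarith
    · -- x ≥ 1
      have : Real.exp x ≤ Real.exp (x ^ 2) := by
        apply Real.exp_le_exp.2; nlinarith
      linarith

lemma cosh_le (t : ℝ) : Real.exp t + Real.exp (-t) ≤ 2 * Real.exp (t ^ 2) := by
  have h1 := exp_le_add_exp_sq t
  have h2 := exp_le_add_exp_sq (-t)
  have : (-t) ^ 2 = t ^ 2 := by ring
  rw [this] at h2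
  linarith



lemma key1R (D K : ℝ) (hD : 1 ≤ D) (hK : D ≤ K) :
    (Real.exp (-D^2/(4*K)) + Real.exp (-(D-1)^2/(4*K)))^2 ≤
      4 * Real.exp (-(D-1)^2/(4*K)) * Real.exp (-D^2/(4*(K+1))) := by
  have hK1 : (1:ℝ) ≤ K := le_trans hD hK
  have hKpos : (0:ℝ) < K := by linarith
  have hK0 : K ≠ 0 := ne_of_gt hKpos
  have hK10 : K + 1 ≠ 0 := by positivity
  obtain ⟨t, ht⟩ : ∃ t : ℝ, t = (2*D-1)/(8*K) := ⟨_, rfl⟩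
  obtain ⟨c, hc⟩ : ∃ c : ℝ, c = D^2/(4*K*(K+1)) := ⟨_, rfl⟩
  have e1 : Real.exp (-D^2/(4*K)) = Real.exp (-(D-1)^2/(4*K)) * Real.exp (-(2*t)) := by
    rw [← Real.exp_add]; congr 1; subst ht; field_simp; ring
  have e3 : Real.exp (-D^2/(4*(K+1))) = Real.exp (-(D-1)^2/(4*K)) * Real.exp (c-2*t) := by
    rw [← Real.exp_add]; congr 1; subst ht hc; field_simp; ring
  rw [e1, e3]
  have hE2 : 0 < Real.exp (-(D-1)^2/(4*K)) := Real.exp_pos _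
  have hcc : 2*t^2 ≤ c := by
    have h8 : (2*D-1)^2*(K+1) ≤ 8*K*D^2 := by nlinarith
    have hr : 2*t^2 = (2*D-1)^2/(32*K^2) := by
      subst ht; field_simp; ring
    rw [hr, hc, div_le_div_iff₀ (by positivity) (by positivity)]
    nlinarith
  have hA : Real.exp (-(2*t)) = Real.exp (-t) * Real.exp (-t) := by
    rw [← Real.exp_add]; ring_nf
  have hB : Real.exp (-t) * Real.exp t = 1 := by
    rw [← Real.exp_add]; simp
  have hC : Real.exp (2*t^2) * Real.exp (-(2*t)) = Real.exp (2*t^2 - 2*t) := by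
    rw [← Real.exp_add]; ring_nf
  have hD2 : Real.exp (2*t^2) = Real.exp (t^2) * Real.exp (t^2) := by
    rw [← Real.exp_add]; ring_nf
  have key : (Real.exp (-(2*t)) + 1)^2 ≤ 4 * Real.exp (c - 2*t) := by
    have step1 : (Real.exp (-(2*t)) + 1)^2 = (Real.exp (-t))^2 * (Real.exp t + Real.exp (-t))^2 := by
      have expand : (Real.exp (-t))^2 * (Real.exp t + Real.exp (-t))^2 =
          (Real.exp (-t) * Real.exp t)^2 + 2*(Real.exp (-t)*Real.exp t)*(Real.exp (-t)*Real.exp (-t))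
            + (Real.exp (-t)*Real.exp (-t))^2 := by ring
      rw [expand, hB, ← hA]; ring
    have step2 : (Real.exp t + Real.exp (-t))^2 ≤ (2*Real.exp (t^2))^2 :=
      pow_le_pow_left₀ (by positivity) (cosh_le t) 2
    have step3 : (Real.exp (-t))^2 * (2*Real.exp (t^2))^2 = 4 * Real.exp (2*t^2 - 2*t) := by
      rw [← hC, hD2, hA]; ring
    have step4 : Real.exp (2*t^2 - 2*t) ≤ Real.exp (c - 2*t) :=
      Real.exp_le_exp.2 (by linarith)
    calc (Real.exp (-(2*t)) + 1)^2 = (Real.exp (-t))^2 * (Real.exp t + Real.exp (-t))^2 := step1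
      _ ≤ (Real.exp (-t))^2 * (2*Real.exp (t^2))^2 :=
          mul_le_mul_of_nonneg_left step2 (by positivity)
      _ = 4 * Real.exp (2*t^2 - 2*t) := step3
      _ ≤ 4 * Real.exp (c - 2*t) := by linarith
  calc (Real.exp (-(D-1)^2/(4*K)) * Real.exp (-(2*t)) + Real.exp (-(D-1)^2/(4*K)))^2
      = (Real.exp (-(D-1)^2/(4*K)))^2 * ((Real.exp (-(2*t)) + 1)^2) := by ring
    _ ≤ (Real.exp (-(D-1)^2/(4*K)))^2 * (4 * Real.exp (c - 2*t)) :=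
        mul_le_mul_of_nonneg_left key (sq_nonneg _)
    _ = 4 * Real.exp (-(D-1)^2/(4*K)) * (Real.exp (-(D-1)^2/(4*K)) * Real.exp (c - 2*t)) := by ring

lemma key1 {d k : ℕ} (h1 : 1 ≤ d) (hdk : d ≤ k) :
    (Real.exp (-(d:ℝ)^2/(4*k)) + Real.exp (-((d:ℝ)-1)^2/(4*k)))^2 ≤
      4 * Real.exp (-((d:ℝ)-1)^2/(4*k)) * Real.exp (-(d:ℝ)^2/(4*(k+1))) :=
  key1R d k (by exact_mod_cast h1) (by exact_mod_cast hdk)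


lemma real_core {W : Type*} [MeasurableSpace W] (ν : Measure W) [IsProbabilityMeasure ν]
    (a b : W → ℝ) (ham : Measurable a) (hbm : Measurable b)
    (ha0 : ∀ w, 0 ≤ a w) (ha1 : ∀ w, a w ≤ 1)
    (hb0 : ∀ w, 0 ≤ b w) (hb1 : ∀ w, b w ≤ 1)
    (P Q : ℝ) (hP0 : 0 ≤ P) (hPQ : P ≤ Q) (hQ0 : 0 < Q)
    (hdiag : ∀ w, a w * b w ≤ P) (hoff : ∀ w w', a w * b w' ≤ Q) :
    (∫ w, a w ∂ν) * (∫ w, b w ∂ν) ≤ (P+Q)^2/(4*Q) := by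
  have hne : Nonempty W := by
    by_contra h
    have : (Set.univ : Set W) = ∅ := by
      simp [Set.eq_empty_iff_forall_notMem]; intro x; exact h ⟨x⟩
    have h1 : ν Set.univ = 1 := measure_univ
    rw [this] at h1; simp at h1
  -- integrability
  have hai : Integrable a ν := by
    apply Integrable.mono' (integrable_const (1:ℝ)) ham.aestronglyMeasurable
    filter_upwards with w
    rw [Real.norm_eq_abs, abs_of_nonneg (ha0 w)]; exact ha1 w
  have hbi : Integrable b ν := by
    apply Integrable.mono' (integrable_const (1:ℝ)) hbm.aestronglyMeasurable
    filter_upwards with w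
    rw [Real.norm_eq_abs, abs_of_nonneg (hb0 w)]; exact hb1 w
  -- sups
  have hbddA : BddAbove (Set.range a) := ⟨1, by rintro x ⟨w, rfl⟩; exact ha1 w⟩
  have hbddB : BddAbove (Set.range b) := ⟨1, by rintro x ⟨w, rfl⟩; exact hb1 w⟩
  have hrangeA : (Set.range a).Nonempty := Set.range_nonempty a
  have hrangeB : (Set.range b).Nonempty := Set.range_nonempty b
  set A := sSup (Set.range a) with hAdef
  set B := sSup (Set.range b) with hBdef
  have hAub : ∀ w, a w ≤ A := fun w => le_csSup hbddA ⟨w, rfl⟩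
  have hBub : ∀ w, b w ≤ B := fun w => le_csSup hbddB ⟨w, rfl⟩
  have hA0 : 0 ≤ A := le_trans (ha0 (Classical.arbitrary W)) (hAub _)
  have hB0 : 0 ≤ B := le_trans (hb0 (Classical.arbitrary W)) (hBub _)
  -- A * B ≤ Q
  have hABQ : A * B ≤ Q := by
    rcases eq_or_lt_of_le hB0 with hB | hBpos
    · rw [← hB]; simpa using hQ0.le
    · have h1 : ∀ w, a w ≤ Q / B := by
        intro w
        rcases eq_or_lt_of_le (ha0 w) with haw | hawpos
        · rw [← haw]; positivity
        · have h2 : ∀ w', b w' ≤ Q / a w := fun w' => by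
            rw [le_div_iff₀ hawpos]; rw [mul_comm]; exact hoff w w'
          have h3 : B ≤ Q / a w := csSup_le hrangeB (by rintro x ⟨w', rfl⟩; exact h2 w')
          rw [le_div_iff₀ hBpos]
          calc a w * B ≤ a w * (Q / a w) := by
                apply mul_le_mul_of_nonneg_left h3 (ha0 w)
            _ = Q := by field_simp
      have h4 : A ≤ Q / B := csSup_le hrangeA (by rintro x ⟨w, rfl⟩; exact h1 w)
      rw [← le_div_iff₀ hBpos]; exact h4
  -- integral bounds
  have hIa0 : 0 ≤ ∫ w, a w ∂ν := integral_nonneg ha0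
  have hIb0 : 0 ≤ ∫ w, b w ∂ν := integral_nonneg hb0
  have hIaA : ∫ w, a w ∂ν ≤ A := by
    calc ∫ w, a w ∂ν ≤ ∫ _, A ∂ν := integral_mono hai (integrable_const A) hAub
      _ = A := by simp
  have hIbB : ∫ w, b w ∂ν ≤ B := by
    calc ∫ w, b w ∂ν ≤ ∫ _, B ∂ν := integral_mono hbi (integrable_const B) hBub
      _ = B := by simp
  rcases le_or_gt (A*B) P with hR | hR
  · -- easy case
    have : (∫ w, a w ∂ν) * (∫ w, b w ∂ν) ≤ A * B :=
      mul_le_mul hIaA hIbB hIb0 hA0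
    have hfin : P ≤ (P+Q)^2/(4*Q) := by
      rw [le_div_iff₀ (by positivity)]; nlinarith
    linarith
  · -- main case
    have hpoint : ∀ w, B * a w + A * b w ≤ A * B + P := by
      intro w
      nlinarith [mul_nonneg (sub_nonneg.2 (hAub w)) (sub_nonneg.2 (hBub w)), hdiag w]
    have hint : B * (∫ w, a w ∂ν) + A * (∫ w, b w ∂ν) ≤ A * B + P := by
      have : ∫ w, (B * a w + A * b w) ∂ν ≤ ∫ _, (A * B + P) ∂ν := by
        apply integral_mono ((hai.const_mul B).add (hbi.const_mul A)) (integrable_const _) hpoint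
      rwa [integral_add (hai.const_mul B) (hbi.const_mul A), integral_const_mul,
        integral_const_mul, integral_const, probReal_univ, smul_eq_mul,
        one_mul] at this
    have hABpos : 0 < A * B := lt_of_le_of_lt hP0 hR
    rw [le_div_iff₀ (by positivity)]
    -- 4 R Ia Ib ≤ (R+P)^2, then Q(R+P)^2 ≤ R(P+Q)^2
    have hsum0 : 0 ≤ B * (∫ w, a w ∂ν) + A * (∫ w, b w ∂ν) := by positivity
    have hsq : (B * (∫ w, a w ∂ν) + A * (∫ w, b w ∂ν))^2 ≤ (A*B + P)^2 :=
      pow_le_pow_left₀ hsum0 hint 2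
    have h5 : 4 * (A*B) * ((∫ w, a w ∂ν) * (∫ w, b w ∂ν)) ≤ (A*B + P)^2 := by
      nlinarith [sq_nonneg (B * (∫ w, a w ∂ν) - A * (∫ w, b w ∂ν)), hsq]
    have hQRP2 : P^2 ≤ Q*(A*B) := by nlinarith [mul_le_mul hPQ hR.le hP0 hQ0.le]
    have h6 : Q * (A*B + P)^2 ≤ (A*B) * (P+Q)^2 := by
      nlinarith [mul_nonneg (sub_nonneg.2 hABQ) (sub_nonneg.2 hQRP2)]
    have h7 : (A*B) * (4*Q*((∫ w, a w ∂ν) * (∫ w, b w ∂ν))) ≤ (A*B) * ((P+Q)^2) := by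
      nlinarith [mul_le_mul_of_nonneg_left h5 hQ0.le, h6]
    have h8 := (mul_le_mul_iff_of_pos_left hABpos).mp h7
    linarith [h8]

lemma ennreal_core {W : Type*} [MeasurableSpace W] (ν : Measure W) [IsProbabilityMeasure ν]
    (a b : W → ℝ≥0∞) (ham : Measurable a) (hbm : Measurable b)
    (ha1 : ∀ w, a w ≤ 1) (hb1 : ∀ w, b w ≤ 1)
    (P Q : ℝ) (hP0 : 0 ≤ P) (hPQ : P ≤ Q) (hQ0 : 0 < Q)
    (hdiag : ∀ w, a w * b w ≤ ENNReal.ofReal P)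
    (hoff : ∀ w w', a w * b w' ≤ ENNReal.ofReal Q) :
    (∫⁻ w, a w ∂ν) * (∫⁻ w, b w ∂ν) ≤ ENNReal.ofReal ((P+Q)^2/(4*Q)) := by
  have hafin : ∀ w, a w ≠ ⊤ := fun w => ne_top_of_le_ne_top ENNReal.one_ne_top (ha1 w)
  have hbfin : ∀ w, b w ≠ ⊤ := fun w => ne_top_of_le_ne_top ENNReal.one_ne_top (hb1 w)
  have hIa : ∫⁻ w, a w ∂ν ≤ 1 := by
    calc ∫⁻ w, a w ∂ν ≤ ∫⁻ _, 1 ∂ν := lintegral_mono ha1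
      _ = 1 := by simp
  have hIb : ∫⁻ w, b w ∂ν ≤ 1 := by
    calc ∫⁻ w, b w ∂ν ≤ ∫⁻ _, 1 ∂ν := lintegral_mono hb1
      _ = 1 := by simp
  have hIafin : ∫⁻ w, a w ∂ν ≠ ⊤ := ne_top_of_le_ne_top ENNReal.one_ne_top hIa
  have hIbfin : ∫⁻ w, b w ∂ν ≠ ⊤ := ne_top_of_le_ne_top ENNReal.one_ne_top hIb
  have haR : ∫ w, (a w).toReal ∂ν = (∫⁻ w, a w ∂ν).toReal :=
    integral_toReal ham.aemeasurable (Filter.Eventually.of_forall fun w => lt_top_iff_ne_top.2 (hafin w))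
  have hbR : ∫ w, (b w).toReal ∂ν = (∫⁻ w, b w ∂ν).toReal :=
    integral_toReal hbm.aemeasurable (Filter.Eventually.of_forall fun w => lt_top_iff_ne_top.2 (hbfin w))
  have key := real_core ν (fun w => (a w).toReal) (fun w => (b w).toReal)
    ham.ennreal_toReal hbm.ennreal_toReal
    (fun w => ENNReal.toReal_nonneg) (fun w => by
      simpa using ENNReal.toReal_mono ENNReal.one_ne_top (ha1 w))
    (fun w => ENNReal.toReal_nonneg) (fun w => by
      simpa using ENNReal.toReal_mono ENNReal.one_ne_top (hb1 w))
    P Q hP0 hPQ hQ0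
    (fun w => by
      rw [← ENNReal.toReal_mul]
      have := ENNReal.toReal_mono ENNReal.ofReal_ne_top (hdiag w)
      rwa [ENNReal.toReal_ofReal hP0] at this)
    (fun w w' => by
      rw [← ENNReal.toReal_mul]
      have := ENNReal.toReal_mono ENNReal.ofReal_ne_top (hoff w w')
      rwa [ENNReal.toReal_ofReal (le_trans hP0 hPQ)] at this)
  rw [haR, hbR] at key
  calc (∫⁻ w, a w ∂ν) * (∫⁻ w, b w ∂ν)
      = ENNReal.ofReal ((∫⁻ w, a w ∂ν).toReal * (∫⁻ w, b w ∂ν).toReal) := by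
        rw [ENNReal.ofReal_mul ENNReal.toReal_nonneg, ENNReal.ofReal_toReal hIafin,
          ENNReal.ofReal_toReal hIbfin]
    _ ≤ ENNReal.ofReal ((P+Q)^2/(4*Q)) := ENNReal.ofReal_le_ofReal key


universe u

lemma count_le_insertNth {k : ℕ} {Ω : Fin (k+1) → Type u} (i : Fin (k+1))
    (w w' : Ω i) (y' z' : ∀ j, Ω (i.succAbove j)) :
    ({l | i.insertNth w y' l ≠ i.insertNth w' z' l} : Set (Fin (k+1))).ncard ≤
      1 + ({j | y' j ≠ z' j} : Set (Fin k)).ncard := by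
  have hsub : ({l | i.insertNth w y' l ≠ i.insertNth w' z' l} : Set (Fin (k+1))) ⊆
      insert i (Fin.succAbove i '' {j | y' j ≠ z' j}) := by
    intro l hl
    rcases eq_or_ne l i with rfl | hli
    · exact Set.mem_insert _ _
    · obtain ⟨j, rfl⟩ := Fin.exists_succAbove_eq hli
      refine Set.mem_insert_of_mem _ ⟨j, ?_, rfl⟩
      simpa [Fin.insertNth_apply_succAbove] using hl
  calc ({l | i.insertNth w y' l ≠ i.insertNth w' z' l} : Set (Fin (k+1))).ncard
      ≤ (insert i (Fin.succAbove i '' {j | y' j ≠ z' j})).ncard :=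
        Set.ncard_le_ncard hsub (Set.toFinite _)
    _ ≤ (Fin.succAbove i '' {j | y' j ≠ z' j}).ncard + 1 := Set.ncard_insert_le _ _
    _ ≤ ({j | y' j ≠ z' j} : Set (Fin k)).ncard + 1 := by
        have := Set.ncard_image_le (f := Fin.succAbove i)
          (s := {j | y' j ≠ z' j}) (Set.toFinite _)
        omega
    _ = 1 + ({j | y' j ≠ z' j} : Set (Fin k)).ncard := by omega

lemma count_le_insertNth_same {k : ℕ} {Ω : Fin (k+1) → Type u} (i : Fin (k+1))
    (w : Ω i) (y' z' : ∀ j, Ω (i.succAbove j)) :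
    ({l | i.insertNth w y' l ≠ i.insertNth w z' l} : Set (Fin (k+1))).ncard ≤
      ({j | y' j ≠ z' j} : Set (Fin k)).ncard := by
  have hsub : ({l | i.insertNth w y' l ≠ i.insertNth w z' l} : Set (Fin (k+1))) ⊆
      Fin.succAbove i '' {j | y' j ≠ z' j} := by
    intro l hl
    rcases eq_or_ne l i with rfl | hli
    · exfalso; apply hl; simp [Fin.insertNth_apply_same]
    · obtain ⟨j, rfl⟩ := Fin.exists_succAbove_eq hli
      refine ⟨j, ?_, rfl⟩
      simpa [Fin.insertNth_apply_succAbove] using hl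
  calc ({l | i.insertNth w y' l ≠ i.insertNth w z' l} : Set (Fin (k+1))).ncard
      ≤ (Fin.succAbove i '' {j | y' j ≠ z' j}).ncard := Set.ncard_le_ncard hsub (Set.toFinite _)
    _ ≤ ({j | y' j ≠ z' j} : Set (Fin k)).ncard := Set.ncard_image_le (Set.toFinite _)

lemma ncard_le_fintype {k : ℕ} (s : Set (Fin k)) : s.ncard ≤ k := by
  calc s.ncard ≤ (Set.univ : Set (Fin k)).ncard := Set.ncard_le_ncard (Set.subset_univ _) Set.finite_univ
    _ = k := by simp [Set.ncard_univ]

lemma two_set_pi_bound : ∀ (k : ℕ) {Ω : Fin k → Type u} [∀ i, MeasurableSpace (Ω i)]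
    (μ : ∀ i, Measure (Ω i)) [∀ i, IsProbabilityMeasure (μ i)]
    (A B : Set (∀ i, Ω i)), MeasurableSet A → MeasurableSet B → ∀ (d : ℕ),
    (∀ y ∈ A, ∀ z ∈ B, d ≤ ({i | y i ≠ z i} : Set (Fin k)).ncard) →
    Measure.pi μ A * Measure.pi μ B ≤ ENNReal.ofReal (Real.exp (-(d:ℝ)^2/(4*k))) := by
  intro k
  induction k with
  | zero =>
    intro Ω _ μ _ A B hA hB d hd
    have h0 : (-(d:ℝ)^2/(4*((0:ℕ):ℝ))) = 0 := by norm_num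
    calc Measure.pi μ A * Measure.pi μ B ≤ 1 * 1 :=
        mul_le_mul' prob_le_one prob_le_one
      _ = 1 := by simp
      _ ≤ ENNReal.ofReal (Real.exp (-(d:ℝ)^2/(4*((0:ℕ):ℝ)))) := by
          rw [h0, Real.exp_zero]; simp
  | succ k ih =>
    intro Ω _ μ _ A B hA hB d hd
    rcases Nat.eq_zero_or_pos d with rfl | hd1
    · calc Measure.pi μ A * Measure.pi μ B ≤ 1 * 1 :=
          mul_le_mul' prob_le_one prob_le_one
        _ = 1 := by simp
        _ ≤ ENNReal.ofReal (Real.exp (-((0:ℕ):ℝ)^2/(4*((k+1:ℕ):ℝ)))) := by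
            norm_num
    rcases lt_or_ge (k+1) d with hbig | hdk1
    · -- d > k+1 : A or B empty
      have hAB : A = ∅ ∨ B = ∅ := by
        by_contra h
        push_neg at h
        obtain ⟨y, hy⟩ := h.1
        obtain ⟨z, hz⟩ := h.2
        have h1 := hd y hy z hz
        have h2 := ncard_le_fintype ({i | y i ≠ z i} : Set (Fin (k+1)))
        omega
      rcases hAB with h | h <;> simp [h]
    -- 1 ≤ d ≤ k+1
    set i : Fin (k+1) := 0 with hidef
    haveI : ∀ j, IsProbabilityMeasure (μ (i.succAbove j)) := fun j => inferInstance
    set ν := Measure.pi (fun j => μ (i.succAbove j)) with hνdef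
    set e := MeasurableEquiv.piFinSuccAbove Ω i with hedef
    have hmp := (measurePreserving_piFinSuccAbove μ i).symm e
    set SA : Set (Ω i × ∀ j, Ω (i.succAbove j)) := e.symm ⁻¹' A with hSAdef
    set SB : Set (Ω i × ∀ j, Ω (i.succAbove j)) := e.symm ⁻¹' B with hSBdef
    have hSA : MeasurableSet SA := e.symm.measurable hA
    have hSB : MeasurableSet SB := e.symm.measurable hB
    have hmA : Measure.pi μ A = ((μ i).prod ν) SA := (hmp.measure_preimage hA.nullMeasurableSet).symm
    have hmB : Measure.pi μ B = ((μ i).prod ν) SB := (hmp.measure_preimage hB.nullMeasurableSet).symm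
    have hsymm : ∀ (w : Ω i) (p : ∀ j, Ω (i.succAbove j)), e.symm (w, p) = i.insertNth w p :=
      fun w p => rfl
    set a : Ω i → ℝ≥0∞ := fun w => ν (Prod.mk w ⁻¹' SA) with hadef
    set b : Ω i → ℝ≥0∞ := fun w => ν (Prod.mk w ⁻¹' SB) with hbdef
    have ham : Measurable a := measurable_measure_prodMk_left hSA
    have hbm : Measurable b := measurable_measure_prodMk_left hSB
    have ha1 : ∀ w, a w ≤ 1 := fun w => prob_le_one
    have hb1 : ∀ w, b w ≤ 1 := fun w => prob_le_one
    have hIA : Measure.pi μ A = ∫⁻ w, a w ∂(μ i) := by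
      rw [hmA, Measure.prod_apply hSA]
    have hIB : Measure.pi μ B = ∫⁻ w, b w ∂(μ i) := by
      rw [hmB, Measure.prod_apply hSB]
    -- the two bounds
    set P : ℝ := if d ≤ k then Real.exp (-(d:ℝ)^2/(4*k)) else 0 with hPdef
    set Q : ℝ := Real.exp (-((d:ℝ)-1)^2/(4*k)) with hQdef
    have hP0 : 0 ≤ P := by
      rw [hPdef]; split_ifs
      · exact (Real.exp_pos _).le
      · exact le_refl 0
    have hQ0 : (0:ℝ) < Q := Real.exp_pos _
    have hD1 : (1:ℝ) ≤ (d:ℝ) := by exact_mod_cast hd1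
    have hPQ : P ≤ Q := by
      rw [hPdef]; split_ifs with h
      · rw [hQdef]
        apply Real.exp_le_exp.2
        have hk1 : (1:ℝ) ≤ (k:ℝ) := by
          have : 1 ≤ k := le_trans hd1 h
          exact_mod_cast this
        rw [div_le_div_iff_of_pos_right (by linarith : (0:ℝ) < 4*k)]
        nlinarith
      · exact hQ0.le
    -- diagonal bound
    have hdiag : ∀ w, a w * b w ≤ ENNReal.ofReal P := by
      intro w
      by_cases h : d ≤ k
      · have hPval : P = Real.exp (-(d:ℝ)^2/(4*k)) := if_pos h
        rw [hPval]
        apply ih (fun j => μ (i.succAbove j)) _ _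
          (measurable_prodMk_left hSA) (measurable_prodMk_left hSB) d
        intro y' hy' z' hz'
        have hyA : i.insertNth w y' ∈ A := by
          have : (w, y') ∈ SA := hy'
          rw [hSAdef, Set.mem_preimage, hsymm] at this; exact this
        have hzB : i.insertNth w z' ∈ B := by
          have : (w, z') ∈ SB := hz'
          rw [hSBdef, Set.mem_preimage, hsymm] at this; exact this
        have h1 := hd _ hyA _ hzB
        have h2 := count_le_insertNth_same i w y' z'
        omega
      · have hPval : P = 0 := if_neg h
        rw [hPval]
        have hdk : d = k + 1 := by omega
        have hempty : (Prod.mk w ⁻¹' SA) = ∅ ∨ (Prod.mk w ⁻¹' SB) = ∅ := by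
          by_contra hcon
          push_neg at hcon
          obtain ⟨y', hy'⟩ := hcon.1
          obtain ⟨z', hz'⟩ := hcon.2
          have hyA : i.insertNth w y' ∈ A := by
            have : (w, y') ∈ SA := hy'
            rw [hSAdef, Set.mem_preimage, hsymm] at this; exact this
          have hzB : i.insertNth w z' ∈ B := by
            have : (w, z') ∈ SB := hz'
            rw [hSBdef, Set.mem_preimage, hsymm] at this; exact this
          have h1 := hd _ hyA _ hzB
          have h2 := count_le_insertNth_same i w y' z'
          have h3 := ncard_le_fintype ({j | y' j ≠ z' j} : Set (Fin k))
          omega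
        rcases hempty with h' | h' <;> rw [hadef, hbdef] <;> simp [h']
    -- off-diagonal bound
    have hoff : ∀ w w', a w * b w' ≤ ENNReal.ofReal Q := by
      intro w w'
      have hcast : ((d - 1 : ℕ) : ℝ) = (d:ℝ) - 1 := by
        have := Nat.cast_sub (R := ℝ) hd1
        simpa using this
      have key := ih (fun j => μ (i.succAbove j)) (Prod.mk w ⁻¹' SA) (Prod.mk w' ⁻¹' SB)
        (measurable_prodMk_left hSA) (measurable_prodMk_left hSB) (d-1) ?_
      · rw [hQdef, ← hcast]; exact key
      intro y' hy' z' hz'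
      have hyA : i.insertNth w y' ∈ A := by
        have : (w, y') ∈ SA := hy'
        rw [hSAdef, Set.mem_preimage, hsymm] at this; exact this
      have hzB : i.insertNth w' z' ∈ B := by
        have : (w', z') ∈ SB := hz'
        rw [hSBdef, Set.mem_preimage, hsymm] at this; exact this
      have h1 := hd _ hyA _ hzB
      have h2 := count_le_insertNth i w w' y' z'
      omega
    -- final real inequality
    have hfinal : (P+Q)^2/(4*Q) ≤ Real.exp (-(d:ℝ)^2/(4*((k+1:ℕ):ℝ))) := by
      have hcast1 : ((k+1:ℕ):ℝ) = (k:ℝ)+1 := by push_cast; ring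
      rw [hcast1]
      by_cases h : d ≤ k
      · have hPval : P = Real.exp (-(d:ℝ)^2/(4*k)) := if_pos h
        rw [hPval, hQdef, div_le_iff₀ (by positivity)]
        have := key1 hd1 h
        nlinarith [this]
      · have hdk : d = k + 1 := by omega
        have hPval : P = 0 := if_neg h
        have hdr : (d:ℝ) = (k:ℝ)+1 := by rw [hdk]; push_cast; ring
        have hQk : Q = Real.exp (-(k:ℝ)/4) := by
          rw [hQdef, hdr]
          rcases Nat.eq_zero_or_pos k with rfl | hk
          · norm_num
          · congr 1
            have hk0 : (k:ℝ) ≠ 0 := by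
              have : (0:ℝ) < k := by exact_mod_cast hk
              linarith
            field_simp
            ring
        have htarget : Real.exp (-(d:ℝ)^2/(4*((k:ℝ)+1))) = Real.exp (-((k:ℝ)+1)/4) := by
          rw [hdr]; congr 1
          have : (0:ℝ) < (k:ℝ)+1 := by positivity
          field_simp
        rw [hPval, hQk, htarget]
        have hsplit : Real.exp (-((k:ℝ)+1)/4) = Real.exp (-(k:ℝ)/4) * Real.exp (-(1:ℝ)/4) := by
          rw [← Real.exp_add]; congr 1; ring
        have hq : (0:ℝ) < Real.exp (-(k:ℝ)/4) := Real.exp_pos _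
        have he4 : (1:ℝ)/4 ≤ Real.exp (-(1:ℝ)/4) := by
          have := Real.add_one_le_exp (-(1:ℝ)/4)
          linarith
        rw [hsplit]
        rw [div_le_iff₀ (by positivity)]
        nlinarith
    rw [hIA, hIB]
    calc (∫⁻ w, a w ∂(μ i)) * (∫⁻ w, b w ∂(μ i))
        ≤ ENNReal.ofReal ((P+Q)^2/(4*Q)) :=
          ennreal_core (μ i) a b ham hbm ha1 hb1 P Q hP0 hPQ hQ0 hdiag hoff
      _ ≤ ENNReal.ofReal (Real.exp (-(d:ℝ)^2/(4*((k+1:ℕ):ℝ)))) :=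
          ENNReal.ofReal_le_ofReal hfinal

section Hide

variable {k : ℕ} {Ω : Fin k → Type*} [∀ i, MeasurableSpace (Ω i)]

lemma measurable_some' {α : Type*} [MeasurableSpace α] :
    Measurable (some : α → Option α) := fun _ hs => hs

/-- Hide the coordinates in `S`. -/
def hideSet (S : Finset (Fin k)) (y : ∀ i, Ω i) : ∀ i, Option (Ω i) :=
  fun i => if i ∈ S then none else some (y i)

lemma measurable_hideSet (S : Finset (Fin k)) : Measurable (hideSet (Ω := Ω) S) := by
  apply measurable_pi_lambda
  intro i
  by_cases h : i ∈ S
  · simp only [hideSet, if_pos h]; exact measurable_const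
  · simp only [hideSet, if_neg h]
    exact measurable_some'.comp (measurable_pi_apply i)

lemma canBias_iff (f : (∀ i, Option (Ω i)) → Bool) (y : ∀ i, Ω i) (m : ℝ) (v : Bool) :
    CanBias f y m v ↔ ∃ S : Finset (Fin k), ((S.card : ℝ) ≤ m ∧ f (hideSet S y) = v) := by
  classical
  constructor
  · rintro ⟨y', h1, h2, h3⟩
    refine ⟨Finset.univ.filter (fun i => y' i = none), ?_, ?_⟩
    · have hset : ({i | y' i = none} : Set (Fin k)) =
          ↑(Finset.univ.filter (fun i => y' i = none)) := by ext; simp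
      rw [hset, Set.ncard_coe_finset] at h2
      exact h2
    · have heq : hideSet (Finset.univ.filter (fun i => y' i = none)) y = y' := by
        funext i
        by_cases h : y' i = none
        · simp [hideSet, h]
        · rcases h1 i with h' | h'
          · simp [hideSet, h, h']
          · exact absurd h' h
      rw [heq]; exact h3
  · rintro ⟨S, h1, h2⟩
    refine ⟨hideSet S y, fun i => ?_, ?_, h2⟩
    · by_cases h : i ∈ S <;> simp [hideSet, h]
    · have hset : ({i | hideSet S y i = none} : Set (Fin k)) = ↑S := by
        ext i; by_cases h : i ∈ S <;> simp [hideSet, h]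
      rw [hset, Set.ncard_coe_finset]
      exact h1

lemma measurableSet_canBias (f : (∀ i, Option (Ω i)) → Bool) (hf : Measurable f)
    (m : ℝ) (v : Bool) : MeasurableSet {y | CanBias f y m v} := by
  classical
  have hset : {y | CanBias f y m v} =
      ⋃ S ∈ {S : Finset (Fin k) | (S.card : ℝ) ≤ m}, {y | f (hideSet S y) = v} := by
    ext y
    simp only [Set.mem_setOf_eq, canBias_iff, Set.mem_iUnion, exists_prop]
  rw [hset]
  apply MeasurableSet.biUnion (Set.to_countable _)
  intro S _
  exact (hf.comp (measurable_hideSet S)) (MeasurableSet.singleton v)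

end Hide


/-- One-round coin-flipping game: for any `0 < α ≤ 1/2`, there is a value
`v ∈ {0,1}` such that with probability at least `1 - α` over the players'
independent draws, the drawn sequence can be biased towards `v` by hiding at
most `8·√(k·ln(α⁻¹))` players' values. -/
theorem statement9 {k : ℕ} {Ω : Fin k → Type*} [∀ i, MeasurableSpace (Ω i)]
    (μ : ∀ i, Measure (Ω i)) [∀ i, IsProbabilityMeasure (μ i)]
    (f : (∀ i, Option (Ω i)) → Bool) (hf : Measurable f)
    (α : ℝ) (hα0 : 0 < α) (hα : α ≤ 1 / 2) :
    ∃ v : Bool,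
      1 - ENNReal.ofReal α ≤
        Measure.pi μ {y | CanBias f y (8 * Real.sqrt (k * Real.log α⁻¹)) v} := by
  classical
  set m : ℝ := 8 * Real.sqrt (k * Real.log α⁻¹) with hmdef
  have hlog0 : 0 ≤ Real.log α⁻¹ := Real.log_nonneg (one_le_inv_iff₀.2 ⟨hα0, by linarith⟩)
  have hm0 : 0 ≤ m := by positivity
  rcases Nat.eq_zero_or_pos k with hk | hk
  · -- k = 0 : the single point can always be biased
    subst hk
    refine ⟨f (fun i => i.elim0), ?_⟩
    have huniv : {y | CanBias f y m (f (fun i => i.elim0))} = Set.univ := by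
      apply Set.eq_univ_of_forall
      intro y
      refine ⟨fun i => i.elim0, fun i => i.elim0, ?_, rfl⟩
      have : ({i | (fun i => i.elim0 : ∀ i : Fin 0, Option (Ω i)) i = none} : Set (Fin 0)) = ∅ :=
        Set.eq_empty_of_isEmpty _
      rw [this]
      simpa using hm0
    rw [huniv, measure_univ]
    exact tsub_le_self
  -- main case : k ≥ 1
  by_contra hcon
  push_neg at hcon
  set Sv : Bool → Set (∀ i, Ω i) := fun v => {y | CanBias f y m v} with hSvdef
  have hSm : ∀ v, MeasurableSet (Sv v) := fun v => measurableSet_canBias f hf m v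
  set Av : Bool → Set (∀ i, Ω i) := fun v => (Sv v)ᶜ with hAvdef
  have hge : ∀ v, ENNReal.ofReal α < Measure.pi μ (Av v) := by
    intro v
    have h1 : Measure.pi μ (Sv v) < 1 - ENNReal.ofReal α := hcon v
    have h2 : Measure.pi μ (Av v) = 1 - Measure.pi μ (Sv v) :=
      prob_compl_eq_one_sub (hSm v)
    rw [h2]
    have hc1 : AddLECancellable (ENNReal.ofReal α) :=
      ENNReal.cancel_of_ne ENNReal.ofReal_ne_top
    have hc2 : AddLECancellable (Measure.pi μ (Sv v)) :=
      ENNReal.cancel_of_ne (measure_ne_top _ _)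
    rw [hc2.lt_tsub_iff_right]
    have := hc1.lt_tsub_iff_right.1 h1
    rwa [add_comm] at this
  set d : ℕ := Nat.floor m + 1 with hddef
  have hdist : ∀ y ∈ Av true, ∀ z ∈ Av false, d ≤ ({i | y i ≠ z i} : Set (Fin k)).ncard := by
    intro y hy z hz
    by_contra hlt
    push_neg at hlt
    have hle : ({i | y i ≠ z i} : Set (Fin k)).ncard ≤ Nat.floor m := by omega
    have hcard : ((({i | y i ≠ z i} : Set (Fin k)).ncard : ℝ)) ≤ m := by
      rw [← Nat.le_floor_iff hm0] at *
      exact_mod_cast hle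
    set S : Finset (Fin k) := ({i | y i ≠ z i} : Set (Fin k)).toFinset with hSdef
    have hcardS : ((S.card : ℝ)) ≤ m := by
      rw [hSdef]
      rwa [Set.ncard_eq_toFinset_card'] at hcard
    have heq : hideSet S y = hideSet S z := by
      funext i
      by_cases h : i ∈ S
      · simp [hideSet, h]
      · have hyz : y i = z i := by
          rw [hSdef, Set.mem_toFinset] at h
          simpa using h
        simp [hideSet, h, hyz]
    have h1 : ¬ CanBias f y m true := hy
    have h2 : ¬ CanBias f z m false := hz
    rw [canBias_iff] at h1 h2
    push_neg at h1 h2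
    have e1 := h1 S hcardS
    have e2 := h2 S hcardS
    rw [heq] at e1
    rcases Bool.eq_false_or_eq_true (f (hideSet S z)) with h' | h'
    · exact e1 h'
    · exact e2 h'
  have hbound := two_set_pi_bound k μ (Av true) (Av false)
    ((hSm true).compl) ((hSm false).compl) d hdist
  -- numeric estimate
  have hkR : (0:ℝ) < k := by exact_mod_cast hk
  have hmd : m < (d:ℝ) := by
    have := Nat.lt_floor_add_one m
    rw [hddef]
    push_cast
    linarith
  have hm2 : m^2 = 64 * ((k:ℝ) * Real.log α⁻¹) := by
    rw [hmdef, mul_pow, Real.sq_sqrt (by positivity)]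
    norm_num
  have hexp : Real.exp (-(d:ℝ)^2/(4*k)) ≤ α^2 := by
    have h1 : m^2 ≤ (d:ℝ)^2 := by nlinarith
    have h2 : -(d:ℝ)^2/(4*(k:ℝ)) ≤ -(16 * Real.log α⁻¹) := by
      have hself : m^2/(4*(k:ℝ)) = 16 * Real.log α⁻¹ := by
        rw [hm2]; field_simp; ring
      rw [← hself, ← neg_div]
      rw [div_le_div_iff_of_pos_right (by positivity : (0:ℝ) < 4*(k:ℝ))]
      linarith
    calc Real.exp (-(d:ℝ)^2/(4*k)) ≤ Real.exp (-(16 * Real.log α⁻¹)) :=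
          Real.exp_le_exp.2 h2
      _ = α^(16:ℕ) := by
          rw [Real.log_inv]
          have : -(16 * -Real.log α) = (16:ℕ) * Real.log α := by push_cast; ring
          rw [this, Real.exp_nat_mul, Real.exp_log hα0]
      _ ≤ α^(2:ℕ) := pow_le_pow_of_le_one hα0.le (by linarith) (by norm_num)
  -- contradiction
  have hfin : ∀ v, Measure.pi μ (Av v) ≠ ⊤ := fun v => measure_ne_top _ _
  have h1 : α < (Measure.pi μ (Av true)).toReal :=
    (ENNReal.ofReal_lt_iff_lt_toReal hα0.le (hfin true)).1 (hge true)
  have h2 : α < (Measure.pi μ (Av false)).toReal :=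
    (ENNReal.ofReal_lt_iff_lt_toReal hα0.le (hfin false)).1 (hge false)
  have h3 : (Measure.pi μ (Av true)).toReal * (Measure.pi μ (Av false)).toReal ≤ α^2 := by
    have hb2 : Measure.pi μ (Av true) * Measure.pi μ (Av false) ≤ ENNReal.ofReal (α^2) :=
      le_trans hbound (ENNReal.ofReal_le_ofReal hexp)
    have := ENNReal.toReal_mono ENNReal.ofReal_ne_top hb2
    rwa [ENNReal.toReal_mul, ENNReal.toReal_ofReal (by positivity)] at this
  nlinarith
end

section
/- Let n ≥ 6 be an integer and consider the one-round coin-flipping game in which only k of the players (0 ≤ k ≤ n) draw values from (independent, arbitrary) distributions while all other players' transitions are deterministic, with a fixed measurable outcome function f. Then there exists a value v ∈ {0,1} such that, with probability at least 1 − 1/n³ over the random draws, the drawn sequence can be biased towards v within budget 8·√(k·(ln n)³). -/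
open MeasureTheory
open scoped ENNReal

set_option maxHeartbeats 1000000

open Real
open scoped NNReal Classical

universe u

lemma lemLreal {l x : ℝ} (hl : 0 ≤ l) (hx0 : 0 < x) (hx1 : x ≤ 1) :
    min (exp l) x⁻¹ ≤ exp (2 * l ^ 2) * (2 - x) := by
  have hex : (0:ℝ) < exp l := exp_pos _
  have hge : 1 + 2 * l ^ 2 ≤ exp (2 * l ^ 2) := by
    have := add_one_le_exp (2 * l ^ 2); linarith
  have heneg1 : exp (-l) ≤ 1 := by
    calc exp (-l) ≤ exp 0 := exp_le_exp.2 (by linarith)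
    _ = 1 := exp_zero
  have heneg0 : 0 < exp (-l) := exp_pos _
  rcases le_or_gt x (exp (-l)) with h | h
  · refine le_trans (min_le_left _ _) ?_
    rcases le_or_gt (1/2 : ℝ) l with hl2 | hl2
    · have h1 : exp l ≤ exp (2 * l ^ 2) := exp_le_exp.2 (by nlinarith)
      nlinarith [exp_pos (2 * l ^ 2)]
    · have he1 : exp (-l) ≤ (1 + l)⁻¹ := by
        rw [exp_neg]
        exact inv_anti₀ (by linarith) (by have := add_one_le_exp l; linarith)
      have h1l : (0:ℝ) < 1 + l := by linarith
      have h2l : (0:ℝ) < 1 - l := by linarith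
      have he2 : exp l ≤ (1 - l)⁻¹ := by
        have h1 : 1 - l ≤ exp (-l) := by have := add_one_le_exp (-l); linarith
        calc exp l = (exp (-l))⁻¹ := by rw [exp_neg, inv_inv]
        _ ≤ (1 - l)⁻¹ := inv_anti₀ h2l h1
      have hx2 : 2 - (1+l)⁻¹ ≤ 2 - x := by
        have := le_trans h he1; linarith
      have hpos : (0:ℝ) ≤ (1 + 2*l) * (1 - l) := by nlinarith
      have h3 : (1 + 2*l^2) * ((1 + 2*l) * (1 - l)) ≤ exp (2*l^2) * ((1 + 2*l) * (1 - l)) :=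
        mul_le_mul_of_nonneg_right hge hpos
      have key2 : 1 + l ≤ exp (2*l^2) * ((1 + 2*l) * (1 - l)) := by nlinarith [h3, mul_nonneg (mul_nonneg (mul_nonneg hl hl) hl) (by linarith : (0:ℝ) ≤ 1 - 2*l)]
      have key : (1-l)⁻¹ ≤ exp (2*l^2) * (2 - (1+l)⁻¹) := by
        rw [inv_le_iff_one_le_mul₀ h2l]
        have e1 : 2 - (1+l)⁻¹ = (1 + 2*l) / (1+l) := by field_simp; ring
        rw [e1]
        have e2 : exp (2*l^2) * ((1 + 2*l) / (1+l)) * (1-l)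
            = exp (2*l^2) * ((1 + 2*l) * (1-l)) / (1+l) := by ring
        rw [e2, le_div_iff₀ h1l]
        linarith
      calc exp l ≤ (1-l)⁻¹ := he2
      _ ≤ exp (2*l^2) * (2 - (1+l)⁻¹) := key
      _ ≤ exp (2*l^2) * (2 - x) := by
        have := exp_pos (2*l^2); nlinarith
  · refine le_trans (min_le_right _ _) ?_
    rw [inv_le_iff_one_le_mul₀ hx0]
    have hxe : 1 - x ≤ 1 - exp (-l) := by linarith
    have h0 : 0 ≤ 1 - x := by linarith
    have h0' : 0 ≤ 1 - exp (-l) := by linarith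
    have hsq : (1-x)^2 ≤ (1 - exp (-l))^2 := by nlinarith
    rcases le_or_gt (1/2 : ℝ) l with hl2 | hl2
    · have h1 : (2 - x) * x ≥ exp (-l) := by nlinarith [hsq, mul_nonneg heneg0.le h0']
      have h2 : 1 ≤ exp (2*l^2) * exp (-l) := by
        rw [← exp_add]
        have : (0:ℝ) ≤ 2*l^2 + -l := by nlinarith
        calc (1:ℝ) = exp 0 := exp_zero.symm
        _ ≤ _ := exp_le_exp.2 this
      calc (1:ℝ) ≤ exp (2*l^2) * exp (-l) := h2
      _ ≤ exp (2*l^2) * ((2-x)*x) := mul_le_mul_of_nonneg_left h1 (exp_pos _).le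
      _ = exp (2*l^2) * (2-x) * x := by ring
    · have h1 : 1 - exp (-l) ≤ l := by have := add_one_le_exp (-l); linarith
      have hsq2 : (1-x)^2 ≤ l^2 := by nlinarith
      have h2 : 1 - l^2 ≤ (2-x)*x := by nlinarith
      have h3 : 1 ≤ (1 + 2*l^2) * (1 - l^2) := by nlinarith [mul_nonneg (sq_nonneg l) (by nlinarith : (0:ℝ) ≤ 1 - 2*l^2)]
      calc (1:ℝ) ≤ (1 + 2*l^2) * (1 - l^2) := h3
      _ ≤ exp (2*l^2) * (1 - l^2) := by nlinarith
      _ ≤ exp (2*l^2) * ((2-x)*x) := mul_le_mul_of_nonneg_left h2 (exp_pos _).le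
      _ = exp (2*l^2) * (2-x) * x := by ring

lemma ennreal_mul_min (a b c : ℝ≥0∞) : a * min b c = min (a * b) (a * c) := by
  rcases le_total b c with h | h
  · rw [min_eq_left h, min_eq_left (mul_le_mul_right h a)]
  · rw [min_eq_right h, min_eq_right (mul_le_mul_right h a)]

lemma lemL' {l : ℝ} (hl : 0 ≤ l) {w : ℝ≥0∞} (hw : w ≤ 1) :
    min (ENNReal.ofReal (exp l)) w⁻¹ ≤ ENNReal.ofReal (exp (2 * l ^ 2)) * (2 - w) := by
  have hexp2 : exp l ≤ 2 * exp (2 * l ^ 2) := by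
    rcases le_or_gt (1/2 : ℝ) l with h | h
    · have : exp l ≤ exp (2 * l ^ 2) := exp_le_exp.2 (by nlinarith)
      nlinarith [exp_pos (2 * l ^ 2)]
    · have h1 : exp l ≤ exp (1/2 : ℝ) := exp_le_exp.2 h.le
      have h2 : exp (1/2 : ℝ) < 2 := by
        have e1 : exp (1/2 : ℝ) * exp (1/2 : ℝ) = exp 1 := by
          rw [← exp_add]; norm_num
        nlinarith [exp_one_lt_d9, exp_pos (1/2 : ℝ)]
      have h3 : (1:ℝ) ≤ exp (2 * l ^ 2) := one_le_exp (by positivity)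
      nlinarith
  rcases eq_or_ne w 0 with rfl | hw0
  · simp only [ENNReal.inv_zero, tsub_zero]
    refine le_trans (min_le_left _ _) ?_
    calc ENNReal.ofReal (exp l) ≤ ENNReal.ofReal (2 * exp (2 * l ^ 2)) :=
          ENNReal.ofReal_le_ofReal (by linarith)
    _ = ENNReal.ofReal (exp (2 * l ^ 2) * 2) := by rw [mul_comm]
    _ = ENNReal.ofReal (exp (2 * l ^ 2)) * ENNReal.ofReal 2 :=
          ENNReal.ofReal_mul (exp_pos _).le
    _ = ENNReal.ofReal (exp (2 * l ^ 2)) * 2 := by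
          norm_num
  · have hwtop : w ≠ ⊤ := (hw.trans_lt ENNReal.one_lt_top).ne
    set x := w.toReal with hx
    have hx0 : 0 < x := ENNReal.toReal_pos hw0 hwtop
    have hx1 : x ≤ 1 := by
      rw [hx, ← ENNReal.toReal_one]
      exact ENNReal.toReal_mono ENNReal.one_ne_top hw
    have hwx : w = ENNReal.ofReal x := (ENNReal.ofReal_toReal hwtop).symm
    rw [hwx, ← ENNReal.ofReal_inv_of_pos hx0]
    have hmin : min (ENNReal.ofReal (exp l)) (ENNReal.ofReal x⁻¹)
        = ENNReal.ofReal (min (exp l) x⁻¹) := by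
      rcases le_total (exp l) x⁻¹ with h | h
      · rw [min_eq_left (ENNReal.ofReal_le_ofReal h), min_eq_left h]
      · rw [min_eq_right (ENNReal.ofReal_le_ofReal h), min_eq_right h]
    rw [hmin]
    have h2x : (2:ℝ≥0∞) - ENNReal.ofReal x = ENNReal.ofReal (2 - x) := by
      rw [ENNReal.ofReal_sub _ hx0.le]
      norm_num
    rw [h2x, ← ENNReal.ofReal_mul (exp_pos _).le]
    exact ENNReal.ofReal_le_ofReal (lemLreal hl hx0 hx1)

lemma two_sub_mul_le_one {W : ℝ≥0∞} (h : W ≤ 1) : (2 - W) * W ≤ 1 := by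
  lift W to ℝ≥0 using (h.trans_lt ENNReal.one_lt_top).ne
  have h' : W ≤ 1 := by exact_mod_cast h
  have : ((2:ℝ≥0∞)) = ((2:ℝ≥0) : ℝ≥0∞) := by norm_cast
  rw [this, ← ENNReal.coe_sub, ← ENNReal.coe_mul, ← ENNReal.coe_one, ENNReal.coe_le_coe]
  have h2 : W ≤ 2 := h'.trans (by norm_num)
  rw [← NNReal.coe_le_coe, NNReal.coe_mul, NNReal.coe_sub h2, NNReal.coe_one]
  have h1 : (W:ℝ) ≤ 1 := h'
  have h0 : (0:ℝ) ≤ W := W.coe_nonneg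
  push_cast
  nlinarith

lemma CAI {Ω₀ : Type*} [MeasurableSpace Ω₀] (ν : Measure Ω₀) [IsProbabilityMeasure ν]
    {α : Ω₀ → ℝ≥0∞} (hm : Measurable α) (h1 : ∀ ω, α ω ≤ 1) {l : ℝ} (hl : 0 ≤ l) :
    (∫⁻ ω, min (α ω)⁻¹ (ENNReal.ofReal (exp l) / ⨆ ω', α ω') ∂ν) * ∫⁻ ω, α ω ∂ν
      ≤ ENNReal.ofReal (exp (2 * l ^ 2)) := by
  set c := ENNReal.ofReal (exp l) with hc
  set γ := ENNReal.ofReal (exp (2 * l ^ 2)) with hγ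
  set S := ⨆ ω', α ω' with hS
  by_cases hS0 : S = 0
  · have hα : ∀ ω, α ω = 0 := fun ω => le_antisymm (hS0 ▸ le_iSup α ω) zero_le
    have hz : ∫⁻ ω, α ω ∂ν = 0 := by simp [hα]
    rw [hz, mul_zero]; exact zero_le
  · have hS1 : S ≤ 1 := iSup_le fun ω => h1 ω
    have hStop : S ≠ ⊤ := (hS1.trans_lt ENNReal.one_lt_top).ne
    have hγtop : γ ≠ ⊤ := ENNReal.ofReal_ne_top
    set w : Ω₀ → ℝ≥0∞ := fun ω => α ω / S with hwdef
    have hwm : Measurable w := hm.div_const S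
    have hw1 : ∀ ω, w ω ≤ 1 := by
      intro ω
      calc w ω ≤ S / S := ENNReal.div_le_div_right (le_iSup α ω) S
      _ = 1 := ENNReal.div_self hS0 hStop
    have hαw : ∀ ω, α ω = S * w ω := fun ω => (ENNReal.mul_div_cancel hS0 hStop).symm
    have hpoint : ∀ ω, min (α ω)⁻¹ (c / S) ≤ S⁻¹ * γ * (2 - w ω) := by
      intro ω
      have e1 : (α ω)⁻¹ = S⁻¹ * (w ω)⁻¹ := by
        rw [hαw ω, ENNReal.mul_inv (Or.inl hS0) (Or.inl hStop)]
      have e2 : c / S = S⁻¹ * c := by rw [div_eq_mul_inv, mul_comm]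
      rw [e1, e2, ← ennreal_mul_min, mul_assoc]
      refine mul_le_mul_right ?_ _
      rw [min_comm]
      exact lemL' hl (hw1 ω)
    have hSinvtop : S⁻¹ ≠ ⊤ := by
      simp [ENNReal.inv_ne_top, hS0]
    set W := ∫⁻ ω, w ω ∂ν with hW
    have hW1 : W ≤ 1 := by
      calc W ≤ ∫⁻ _, 1 ∂ν := lintegral_mono hw1
      _ = 1 := by simp
    have hint1 : ∫⁻ ω, min (α ω)⁻¹ (c / S) ∂ν ≤ S⁻¹ * γ * (2 - W) := by
      calc ∫⁻ ω, min (α ω)⁻¹ (c / S) ∂ν ≤ ∫⁻ ω, S⁻¹ * γ * (2 - w ω) ∂ν :=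
            lintegral_mono hpoint
      _ = S⁻¹ * γ * ∫⁻ ω, 2 - w ω ∂ν :=
            lintegral_const_mul' _ _ (by simp [ENNReal.mul_ne_top, hSinvtop, hγtop])
      _ = S⁻¹ * γ * (2 - W) := by
            rw [lintegral_sub hwm]
            · simp [hW]
            · exact (hW1.trans_lt ENNReal.one_lt_top).ne
            · exact Filter.Eventually.of_forall fun ω => (hw1 ω).trans one_le_two
    have hint2 : ∫⁻ ω, α ω ∂ν = S * W := by
      simp_rw [hαw]
      rw [lintegral_const_mul' _ _ hStop]
    calc (∫⁻ ω, min (α ω)⁻¹ (c / S) ∂ν) * ∫⁻ ω, α ω ∂ν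
        ≤ (S⁻¹ * γ * (2 - W)) * (S * W) := by
          rw [hint2]; exact mul_le_mul_left hint1 _
    _ = (S⁻¹ * S) * (γ * ((2 - W) * W)) := by ring
    _ = γ * ((2 - W) * W) := by rw [ENNReal.inv_mul_cancel hS0 hStop, one_mul]
    _ ≤ γ * 1 := mul_le_mul_right (two_sub_mul_le_one hW1) _
    _ = γ := mul_one γ

noncomputable def ham {n : ℕ} {Ω : Fin n → Type u} (y z : ∀ i, Ω i) : ℕ :=
  (Finset.univ.filter fun i => y i ≠ z i).card

noncomputable def eD {n : ℕ} {Ω : Fin n → Type u} (c : ℝ≥0∞) (A : Set (∀ i, Ω i))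
    (y : ∀ i, Ω i) : ℝ≥0∞ :=
  ⨅ z : A, c ^ ham y (z : ∀ i, Ω i)

lemma ham_insertNth {n : ℕ} {Ω : Fin (n + 1) → Type u} (ω ω' : Ω 0)
    (y z : ∀ j, Ω ((0 : Fin (n + 1)).succAbove j)) :
    ham ((0 : Fin (n+1)).insertNth ω y) ((0 : Fin (n+1)).insertNth ω' z)
      = (if ω ≠ ω' then 1 else 0) + ham y z := by
  unfold ham
  rw [Finset.card_filter, Finset.card_filter, Fin.sum_univ_succAbove _ 0]
  simp only [Fin.insertNth_apply_same, Fin.insertNth_apply_succAbove]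

lemma lintegral_prod_le' {A B : Type*} [MeasurableSpace A] [MeasurableSpace B]
    (μ : Measure A) (ν : Measure B) [SFinite μ] [SFinite ν] (f : A × B → ℝ≥0∞) :
    ∫⁻ p, f p ∂(μ.prod ν) ≤ ∫⁻ x, ∫⁻ y, f (x, y) ∂ν ∂μ := by
  rw [MeasureTheory.lintegral_def]
  refine iSup₂_le fun g hg => ?_
  calc g.lintegral (μ.prod ν) = ∫⁻ p, g p ∂(μ.prod ν) := (g.lintegral_eq_lintegral _).symm
  _ = ∫⁻ x, ∫⁻ y, g (x, y) ∂ν ∂μ := lintegral_prod _ g.measurable.aemeasurable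
  _ ≤ _ := lintegral_mono fun x => lintegral_mono fun y => hg (x, y)

lemma key {l : ℝ} (hl : 0 ≤ l) :
    ∀ (n : ℕ) (Ω : Fin n → Type u) (inst : ∀ i, MeasurableSpace (Ω i))
      (μ : ∀ i, Measure (Ω i)) (hμ : ∀ i, IsProbabilityMeasure (μ i))
      (K : Finset (Fin n)) (d : ∀ i, Ω i)
      (hdet : ∀ i ∉ K, μ i = Measure.dirac (d i))
      (A : Set (∀ i, Ω i)) (hA : MeasurableSet A),
      (∫⁻ y, eD (ENNReal.ofReal (exp l)) A y ∂Measure.pi μ) * Measure.pi μ A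
        ≤ ENNReal.ofReal (exp (2 * l ^ 2)) ^ K.card := by
  have hc1 : 1 ≤ ENNReal.ofReal (exp l) := by
    rw [← ENNReal.ofReal_one]; exact ENNReal.ofReal_le_ofReal (one_le_exp hl)
  have hγ1 : 1 ≤ ENNReal.ofReal (exp (2 * l ^ 2)) := by
    rw [← ENNReal.ofReal_one]; exact ENNReal.ofReal_le_ofReal (one_le_exp (by positivity))
  have hγ0 : ENNReal.ofReal (exp (2 * l ^ 2)) ≠ 0 := by
    intro h; rw [h] at hγ1; exact (not_le.2 zero_lt_one) hγ1
  have hγtop : ENNReal.ofReal (exp (2 * l ^ 2)) ≠ ⊤ := ENNReal.ofReal_ne_top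
  set c := ENNReal.ofReal (exp l) with hcdef
  set γ := ENNReal.ofReal (exp (2 * l ^ 2)) with hγdef
  have hctop : c ≠ ⊤ := ENNReal.ofReal_ne_top
  intro n
  induction n with
  | zero =>
      intro Ω inst μ hμ K d hdet A hA
      haveI := hμ
      have hK : K = ∅ := Finset.eq_empty_of_isEmpty K
      rcases Set.eq_empty_or_nonempty A with rfl | ⟨z0, hz0⟩
      · simp
      · have h1 : ∀ y, eD c A y ≤ 1 := by
          intro y
          refine (iInf_le _ (⟨z0, hz0⟩ : A)).trans ?_
          have : ham y z0 = 0 := by simp [ham]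
          rw [this, pow_zero]
        calc (∫⁻ y, eD c A y ∂Measure.pi μ) * Measure.pi μ A
            ≤ (∫⁻ _, 1 ∂Measure.pi μ) * 1 :=
              mul_le_mul' (lintegral_mono h1) prob_le_one
        _ = 1 := by simp
        _ ≤ _ := by rw [hK]; simp
  | succ n ih =>
      intro Ω inst μ hμ K d hdet A hA
      haveI := hμ
      set i0 : Fin (n + 1) := 0 with hi0
      set Ω' : Fin n → Type u := fun j => Ω (i0.succAbove j) with hΩ'
      set μ' : ∀ j, Measure (Ω' j) := fun j => μ (i0.succAbove j) with hμ'
      haveI hP' : ∀ j, IsProbabilityMeasure (μ' j) := fun j => hμ _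
      set K' : Finset (Fin n) := Finset.univ.filter (fun j => i0.succAbove j ∈ K) with hK'
      set e := MeasurableEquiv.piFinSuccAbove Ω i0 with he
      have hmp := measurePreserving_piFinSuccAbove μ i0
      set ρ := (μ i0).prod (Measure.pi μ') with hρ
      have hmapeq : Measure.map e (Measure.pi μ) = ρ := hmp.map_eq
      set B : Set (Ω i0 × ∀ j, Ω' j) := ⇑e.symm ⁻¹' A with hB
      have hBm : MeasurableSet B := e.symm.measurable hA
      have hesymm : ∀ p : Ω i0 × ∀ j, Ω' j, e.symm p = i0.insertNth p.1 p.2 :=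
        fun p => rfl
      set α : Ω i0 → ℝ≥0∞ := fun ω => Measure.pi μ' (Prod.mk ω ⁻¹' B) with hα
      have hsec : ∀ ω, MeasurableSet (Prod.mk ω ⁻¹' B) := fun ω => measurable_prodMk_left hBm
      have hαm : Measurable α := measurable_measure_prodMk_left hBm
      have hα1 : ∀ ω, α ω ≤ 1 := fun ω => prob_le_one
      set S := ⨆ ω, α ω with hSdef
      set J : Ω i0 → ℝ≥0∞ := fun ω => ∫⁻ y, eD c (Prod.mk ω ⁻¹' B) y ∂Measure.pi μ' with hJ
      set G := γ ^ K'.card with hG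
      have hG0 : G ≠ 0 := pow_ne_zero _ hγ0
      have hGtop : G ≠ ⊤ := ENNReal.pow_ne_top hγtop
      -- transfer of the measure of A
      have hPA : Measure.pi μ A = ∫⁻ ω, α ω ∂μ i0 := by
        have h1 : Measure.pi μ A = ρ B := by
          rw [← hmapeq, MeasurableEquiv.map_apply]
          congr 1
          ext x
          simp [hB]
        rw [h1, hρ, Measure.prod_apply hBm]
      -- IH
      have hIH : ∀ ω, J ω * α ω ≤ G := by
        intro ω
        refine ih Ω' (fun j => inst _) μ' (fun j => hμ _) K' (fun j => d _)
          (fun j hj => hdet _ ?_) _ (hsec ω)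
        intro hmem
        exact hj (by simp [hK', hmem])
      have hJle : ∀ ω, J ω ≤ G / α ω := by
        intro ω
        rcases eq_or_ne (α ω) 0 with h0 | h0
        · rw [h0, ENNReal.div_zero hG0]; exact le_top
        · rw [ENNReal.le_div_iff_mul_le (Or.inl h0) (Or.inl ((hα1 ω).trans_lt ENNReal.one_lt_top).ne)]
          exact hIH ω
      -- case S = 0
      rcases eq_or_ne S 0 with hS0 | hS0
      · have hz : ∀ ω, α ω = 0 := fun ω => le_antisymm (hS0 ▸ le_iSup α ω) zero_le
        have : Measure.pi μ A = 0 := by rw [hPA]; simp [hz]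
        rw [this, mul_zero]; exact zero_le
      -- pointwise bound
      have hpoint : ∀ (ω : Ω i0) (y : ∀ j, Ω' j), eD c A (e.symm (ω, y)) ≤
          min (eD c (Prod.mk ω ⁻¹' B) y) (⨅ ω', c * eD c (Prod.mk ω' ⁻¹' B) y) := by
        intro ω y
        refine le_min ?_ (le_iInf fun ω' => ?_)
        · refine le_iInf fun z => ?_
          have hz : e.symm (ω, z.1) ∈ A := z.2
          refine (iInf_le _ (⟨e.symm (ω, z.1), hz⟩ : A)).trans ?_
          have hh : ham (e.symm (ω, y)) (e.symm (ω, z.1)) = ham y z.1 := by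
            rw [hesymm, hesymm, ham_insertNth]
            simp
            rfl
          rw [hh]
        · have hc0 : c ≠ 0 := by
            rw [hcdef]
            simp only [ne_eq, ENNReal.ofReal_eq_zero, not_le]
            exact exp_pos l
          have hrw : c * eD c (Prod.mk ω' ⁻¹' B) y
              = ⨅ z : (Prod.mk ω' ⁻¹' B), c * c ^ ham y (z : ∀ j, Ω' j) := by
            rw [eD, ENNReal.mul_iInf_of_ne hc0 hctop]
          rw [hrw]
          refine le_iInf fun z => ?_
          have hz : e.symm (ω', z.1) ∈ A := z.2
          refine (iInf_le _ (⟨e.symm (ω', z.1), hz⟩ : A)).trans ?_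
          have hh : ham (e.symm (ω, y)) (e.symm (ω', z.1)) ≤ 1 + ham y z.1 := by
            rw [hesymm, hesymm, ham_insertNth]
            dsimp only
            split <;> omega
          calc c ^ ham (e.symm (ω, y)) (e.symm (ω', z.1)) ≤ c ^ (1 + ham y z.1) :=
                pow_le_pow_right₀ hc1 hh
          _ = c * c ^ ham y z.1 := by rw [pow_add, pow_one]
      -- integral bound
      have hT : (∫⁻ x, eD c A x ∂Measure.pi μ) ≤ ∫⁻ ω, min (G / α ω) (c * G / S) ∂μ i0 := by
        have h1 : (∫⁻ x, eD c A x ∂Measure.pi μ) = ∫⁻ p, eD c A (e.symm p) ∂ρ := by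
          rw [← hmapeq, lintegral_map_equiv (fun x => eD c A (e.symm x)) e]
          simp
        rw [h1]
        refine le_trans (lintegral_prod_le' _ _ _) ?_
        refine lintegral_mono fun ω => ?_
        have h2 : (∫⁻ y, eD c A (e.symm (ω, y)) ∂Measure.pi μ')
            ≤ min (J ω) (⨅ ω', c * J ω') := by
          refine le_min ?_ (le_iInf fun ω' => ?_)
          · exact le_trans (lintegral_mono fun y => (hpoint ω y).trans (min_le_left _ _)) le_rfl
          · calc (∫⁻ y, eD c A (e.symm (ω, y)) ∂Measure.pi μ')
                ≤ ∫⁻ y, c * eD c (Prod.mk ω' ⁻¹' B) y ∂Measure.pi μ' :=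
                  lintegral_mono fun y => (hpoint ω y).trans
                    ((min_le_right _ _).trans (iInf_le _ ω'))
            _ = c * J ω' := lintegral_const_mul' _ _ hctop
        refine h2.trans (min_le_min (hJle ω) ?_)
        -- ⨅ ω', c * J ω' ≤ c * G / S
        have hfin : ∀ ω', (⨅ ω'', c * J ω'') * α ω' ≤ c * G := by
          intro ω'
          calc (⨅ ω'', c * J ω'') * α ω' ≤ (c * J ω') * α ω' :=
                mul_le_mul_left (iInf_le _ ω') _
          _ = c * (J ω' * α ω') := by ring
          _ ≤ c * G := mul_le_mul_right (hIH ω') _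
        have hSmul : (⨅ ω'', c * J ω'') * S ≤ c * G := by
          rw [hSdef, ENNReal.mul_iSup]
          exact iSup_le hfin
        rw [ENNReal.le_div_iff_mul_le (Or.inl hS0)
          (Or.inl ((iSup_le hα1).trans_lt ENNReal.one_lt_top).ne)]
        exact hSmul
      -- combine
      have hmin : ∀ ω, min (G / α ω) (c * G / S) = G * min (α ω)⁻¹ (c / S) := by
        intro ω
        have h1 : G / α ω = G * (α ω)⁻¹ := div_eq_mul_inv G (α ω)
        have h2 : c * G / S = G * (c / S) := by rw [mul_comm c G, mul_div_assoc]
        rw [h1, h2, ← ennreal_mul_min]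
      have hstep : (∫⁻ x, eD c A x ∂Measure.pi μ) * Measure.pi μ A
          ≤ G * ((∫⁻ ω, min (α ω)⁻¹ (c / S) ∂μ i0) * ∫⁻ ω, α ω ∂μ i0) := by
        rw [hPA]
        refine le_trans (mul_le_mul_left hT _) ?_
        have : (∫⁻ ω, min (G / α ω) (c * G / S) ∂μ i0)
            = G * ∫⁻ ω, min (α ω)⁻¹ (c / S) ∂μ i0 := by
          simp_rw [hmin]
          exact lintegral_const_mul' _ _ hGtop
        rw [this, mul_assoc]
      by_cases h0K : i0 ∈ K
      · have hcard : K.card = K'.card + 1 := by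
          have himg : K'.image (fun j => i0.succAbove j) = K.erase i0 := by
            ext i
            simp only [Finset.mem_image, Finset.mem_erase, hK', Finset.mem_filter,
              Finset.mem_univ, true_and]
            constructor
            · rintro ⟨j, hj, rfl⟩
              exact ⟨Fin.succAbove_ne i0 j, hj⟩
            · rintro ⟨hne, hi⟩
              obtain ⟨j, rfl⟩ := Fin.exists_succAbove_eq hne
              exact ⟨j, hi, rfl⟩
          have h1 : K'.card = (K.erase i0).card := by
            rw [← himg, Finset.card_image_of_injective _ Fin.succAbove_right_injective]
          have hpos : 0 < K.card := Finset.card_pos.2 ⟨i0, h0K⟩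
          rw [h1, Finset.card_erase_of_mem h0K]
          omega
        rw [hcard]
        refine hstep.trans ?_
        rw [pow_succ, mul_comm (γ ^ K'.card) γ, mul_comm G]
        refine mul_le_mul' (CAI (μ i0) hαm hα1 hl) le_rfl
      · have hd : μ i0 = Measure.dirac (d i0) := hdet i0 h0K
        have hcard : K.card = K'.card := by
          have himg : K'.image (fun j => i0.succAbove j) = K := by
            ext i
            simp only [Finset.mem_image, hK', Finset.mem_filter, Finset.mem_univ, true_and]
            constructor
            · rintro ⟨j, hj, rfl⟩; exact hj
            · intro hi
              have hne : i ≠ i0 := by rintro rfl; exact h0K hi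
              obtain ⟨j, rfl⟩ := Fin.exists_succAbove_eq hne
              exact ⟨j, hi, rfl⟩
          rw [← himg, Finset.card_image_of_injective _ Fin.succAbove_right_injective]
        refine hstep.trans ?_
        rw [hd]
        have hminm : Measurable fun ω => min (α ω)⁻¹ (c / S) :=
          (hαm.inv).min measurable_const
        rw [lintegral_dirac' _ hminm, lintegral_dirac' _ hαm]
        calc G * (min (α (d i0))⁻¹ (c / S) * α (d i0))
            ≤ G * ((α (d i0))⁻¹ * α (d i0)) :=
              mul_le_mul_right (mul_le_mul_left (min_le_left _ _) _) _
        _ ≤ G * 1 := mul_le_mul_right (ENNReal.inv_mul_le_one _) _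
        _ = γ ^ K.card := by rw [mul_one, hG, hcard]

/-- One-round coin-flipping game on `n ≥ 6` players of which only the `k`
players in `K` draw random values (all other players are deterministic, i.e.
their distribution is a Dirac mass): there is `v ∈ {0,1}` such that with
probability at least `1 - 1/n³` the drawn sequence can be biased towards `v`
by hiding at most `8·√(k·(ln n)³)` players' values. -/
theorem statement10 (n : ℕ) (hn : 6 ≤ n) (k : ℕ) (hk : k ≤ n)
    {Ω : Fin n → Type*} [∀ i, MeasurableSpace (Ω i)]
    (μ : ∀ i, Measure (Ω i)) [∀ i, IsProbabilityMeasure (μ i)]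
    (K : Finset (Fin n)) (hK : K.card = k)
    (d : ∀ i, Ω i) (hdet : ∀ i ∉ K, μ i = Measure.dirac (d i))
    (f : (∀ i, Option (Ω i)) → Bool) (hf : Measurable f) :
    ∃ v : Bool,
      1 - 1 / (n : ℝ≥0∞) ^ 3 ≤
        Measure.pi μ {y | CanBias f y (8 * Real.sqrt (k * Real.log n ^ 3)) v} := by
  set B : ℝ := 8 * Real.sqrt (k * Real.log n ^ 3) with hBdef
  have hB0 : 0 ≤ B := by positivity
  set M : ℕ := ⌊B⌋₊ with hM
  -- hiding maps
  set hide : Finset (Fin n) → (∀ i, Ω i) → (∀ i, Option (Ω i)) :=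
    fun T y i => if i ∈ T then none else some (y i) with hhide
  have msome : ∀ i : Fin n, Measurable (some : Ω i → Option (Ω i)) := fun i s hs => hs
  have mhide : ∀ T, Measurable (hide T) := by
    intro T
    refine measurable_pi_lambda _ fun i => ?_
    by_cases h : i ∈ T
    · simp only [hhide, if_pos h]; exact measurable_const
    · simp only [hhide, if_neg h]; exact (msome i).comp (measurable_pi_apply i)
  -- event description
  have hEv : ∀ v : Bool, {y | CanBias f y B v}
      = ⋃ (T : Finset (Fin n)) (_ : T.card ≤ M), {y | f (hide T y) = v} := by
    intro v
    ext y
    simp only [Set.mem_setOf_eq, Set.mem_iUnion]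
    constructor
    · rintro ⟨y', hy', hcard, hfy⟩
      set T : Finset (Fin n) := Finset.univ.filter (fun i => y' i = none) with hT
      have hset : ({i | y' i = none} : Set (Fin n)) = ↑T := by
        ext i; simp [hT]
      have hTcard : (T.card : ℝ) ≤ B := by
        rw [hset, Set.ncard_coe_finset] at hcard; exact hcard
      refine ⟨T, Nat.le_floor hTcard, ?_⟩
      have : hide T y = y' := by
        funext i
        by_cases h : i ∈ T
        · have : y' i = none := by simpa [hT] using h
          simp [hhide, if_pos h, this]
        · have hnone : ¬ y' i = none := by simpa [hT] using h
          rcases hy' i with h1 | h1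
          · simp [hhide, if_neg h, h1]
          · exact absurd h1 hnone
      rw [this]; exact hfy
    · rintro ⟨T, hTM, hfy⟩
      refine ⟨hide T y, fun i => ?_, ?_, hfy⟩
      · by_cases h : i ∈ T
        · right; simp [hhide, if_pos h]
        · left; simp [hhide, if_neg h]
      · have hset : ({i | hide T y i = none} : Set (Fin n)) = ↑T := by
          ext i
          by_cases h : i ∈ T <;> simp [hhide, h]
        rw [hset, Set.ncard_coe_finset]
        calc (T.card : ℝ) ≤ (M : ℝ) := by exact_mod_cast hTM
        _ ≤ B := Nat.floor_le hB0
  have hEvm : ∀ v : Bool, MeasurableSet {y | CanBias f y B v} := by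
    intro v
    rw [hEv v]
    refine MeasurableSet.iUnion fun T => MeasurableSet.iUnion fun _ => ?_
    have hrw : {y | f (hide T y) = v} = hide T ⁻¹' (f ⁻¹' {v}) := rfl
    rw [hrw]
    exact (mhide T) (hf (measurableSet_singleton v))
  -- complements
  set A : Set (∀ i, Ω i) := {y | CanBias f y B true}ᶜ with hA
  set C : Set (∀ i, Ω i) := {y | CanBias f y B false}ᶜ with hC
  have hAmem : ∀ y, y ∈ A ↔ ∀ T : Finset (Fin n), T.card ≤ M → f (hide T y) ≠ true := by
    intro y
    rw [hA, Set.mem_compl_iff, hEv true]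
    simp [Set.mem_iUnion]
  have hCmem : ∀ y, y ∈ C ↔ ∀ T : Finset (Fin n), T.card ≤ M → f (hide T y) ≠ false := by
    intro y
    rw [hC, Set.mem_compl_iff, hEv false]
    simp [Set.mem_iUnion]
  have hAm : MeasurableSet A := (hEvm true).compl
  have hCm : MeasurableSet C := (hEvm false).compl
  -- separation
  have hsep : ∀ z ∈ C, ∀ a ∈ A, M + 1 ≤ ham z a := by
    intro z hz a ha
    by_contra hlt
    push_neg at hlt
    have hcard : (Finset.univ.filter fun i => z i ≠ a i).card ≤ M := by
      have : ham z a ≤ M := by omega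
      exact this
    have heq : hide (Finset.univ.filter fun i => z i ≠ a i) z
        = hide (Finset.univ.filter fun i => z i ≠ a i) a := by
      funext i
      by_cases h : i ∈ Finset.univ.filter fun i => z i ≠ a i
      · simp [hhide, if_pos h]
      · have : z i = a i := by simpa using h
        simp [hhide, if_neg h, this]
    have h1 := (hAmem a).1 ha _ hcard
    have h2 := (hCmem z).1 hz _ hcard
    rw [heq] at h2
    cases hb : f (hide (Finset.univ.filter fun i => z i ≠ a i) a)
    · exact h2 hb
    · exact h1 hb
  -- suppose both fail
  by_contra hcon
  push_neg at hcon
  set ε : ℝ≥0∞ := 1 / (n : ℝ≥0∞) ^ 3 with hε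
  have hn0 : (n : ℝ≥0∞) ≠ 0 := by
    simp only [ne_eq, Nat.cast_eq_zero]; omega
  have hntop : (n : ℝ≥0∞) ≠ ⊤ := ENNReal.natCast_ne_top n
  have hε1 : ε ≤ 1 := by
    rw [hε]
    refine ENNReal.div_le_of_le_mul ?_
    rw [one_mul]
    exact one_le_pow_of_one_le' (by exact_mod_cast Nat.one_le_iff_ne_zero.2 (by omega) : (1:ℝ≥0∞) ≤ n) 3
  have hεtop : ε ≠ ⊤ := by
    rw [hε]
    exact (ENNReal.div_lt_top ENNReal.one_ne_top (pow_ne_zero 3 hn0)).ne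
  have hε0 : ε ≠ 0 := by
    rw [hε, one_div]
    exact ENNReal.inv_ne_zero.2 (ENNReal.pow_ne_top hntop)
  -- probabilities of bad sets
  have hbad : ∀ (v : Bool) (S : Set (∀ i, Ω i)), S = {y | CanBias f y B v}ᶜ →
      ε < Measure.pi μ S := by
    intro v S hS
    have h1 : Measure.pi μ {y | CanBias f y B v} < 1 - ε := hcon v
    have h2 : Measure.pi μ S = 1 - Measure.pi μ {y | CanBias f y B v} := by
      rw [hS, prob_compl_eq_one_sub (hEvm v)]
    rw [h2]
    have h3 : Measure.pi μ {y | CanBias f y B v} + ε < 1 := by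
      calc Measure.pi μ {y | CanBias f y B v} + ε < (1 - ε) + ε :=
            ENNReal.add_lt_add_right hεtop h1
      _ = 1 := tsub_add_cancel_of_le hε1
    have hPfin : Measure.pi μ {y | CanBias f y B v} ≠ ⊤ := measure_ne_top _ _
    refine (ENNReal.cancel_of_ne hPfin).lt_tsub_iff_right.mpr ?_
    rwa [add_comm] at h3
  have hPA : ε < Measure.pi μ A := hbad true A hA
  have hPC : ε < Measure.pi μ C := hbad false C hC
  -- choose l
  have hlog1 : (1:ℝ) ≤ Real.log n := by
    have h6 : (6:ℝ) ≤ (n:ℝ) := by exact_mod_cast hn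
    have he6 : Real.exp 1 ≤ 6 := by
      nlinarith [Real.exp_one_lt_d9]
    calc (1:ℝ) = Real.log (Real.exp 1) := (Real.log_exp 1).symm
    _ ≤ Real.log 6 := Real.log_le_log (Real.exp_pos 1) he6
    _ ≤ Real.log n := Real.log_le_log (by norm_num) h6
  have hlog0 : 0 < Real.log n := lt_of_lt_of_le one_pos hlog1
  set l : ℝ := if k = 0 then 6 * Real.log n else ((M:ℝ) + 1) / (4 * k) with hldef
  have hl : 0 ≤ l := by
    rw [hldef]
    split
    · positivity
    · positivity
  have hnpos : (0:ℝ) < n := by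
    have : (6:ℝ) ≤ (n:ℝ) := by exact_mod_cast hn
    linarith
  -- numeric inequality
  have hnum : Real.exp (2 * l ^ 2) ^ k * (n:ℝ) ^ 6 ≤ Real.exp l ^ (M + 1) := by
    have hn6 : (n:ℝ) ^ 6 = Real.exp ((6:ℕ) * Real.log n) := by
      rw [Real.exp_nat_mul, Real.exp_log hnpos]
    rw [← Real.exp_nat_mul, ← Real.exp_nat_mul, hn6, ← Real.exp_add, Real.exp_le_exp]
    push_cast
    have hexp : (k:ℝ) * (2 * l ^ 2) + 6 * Real.log n ≤ ((M:ℝ) + 1) * l := by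
      rcases eq_or_ne k 0 with hk0 | hk0
      · subst hk0
        have hl6 : l = 6 * Real.log n := by rw [hldef, if_pos rfl]
        rw [hl6]
        push_cast
        have hM0 : (0:ℝ) ≤ (M:ℝ) := Nat.cast_nonneg M
        nlinarith
      · have hκ : (0:ℝ) < k := by
          have : 1 ≤ k := Nat.one_le_iff_ne_zero.2 hk0
          exact_mod_cast Nat.lt_of_lt_of_le Nat.zero_lt_one this
        have hlval : l = ((M:ℝ) + 1) / (4 * k) := by rw [hldef, if_neg hk0]
        set m : ℝ := (M:ℝ) + 1 with hm
        have hmB : B < m := by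
          rw [hm, hM]
          exact_mod_cast Nat.lt_floor_add_one B
        have hm0 : 0 ≤ m := le_trans hB0 hmB.le
        have hB2 : B ^ 2 = 64 * ((k:ℝ) * Real.log n ^ 3) := by
          rw [hBdef, mul_pow, Real.sq_sqrt (by positivity)]
          norm_num
        have hlogsq : (1:ℝ) ≤ Real.log n ^ 2 := by nlinarith
        have hlog3 : Real.log n ≤ Real.log n ^ 3 := by
          nlinarith [mul_le_mul_of_nonneg_left hlogsq hlog0.le]
        have hm2 : 48 * ((k:ℝ) * Real.log n) ≤ m ^ 2 := by
          have h1 : B ^ 2 ≤ m ^ 2 := by nlinarith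
          have h2 : 48 * ((k:ℝ) * Real.log n) ≤ 64 * ((k:ℝ) * Real.log n ^ 3) := by
            nlinarith
          linarith [hB2 ▸ h1]
        rw [hlval]
        have e1 : (k:ℝ) * (2 * (m / (4 * k)) ^ 2) = m ^ 2 / (8 * k) := by
          field_simp; ring
        have e2 : m * (m / (4 * k)) = m ^ 2 / (4 * k) := by
          field_simp
        rw [e1, e2]
        have e3 : m ^ 2 / (4 * k) - m ^ 2 / (8 * k) = m ^ 2 / (8 * k) := by
          field_simp; ring
        have h4 : 6 * Real.log n ≤ m ^ 2 / (8 * k) := by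
          rw [le_div_iff₀ (by positivity : (0:ℝ) < 8 * k)]
          nlinarith [hm2]
        linarith [e3]
    exact hexp
  -- ENNReal part
  set c : ℝ≥0∞ := ENNReal.ofReal (Real.exp l) with hcdef
  set γ : ℝ≥0∞ := ENNReal.ofReal (Real.exp (2 * l ^ 2)) with hγdef
  have hc1 : 1 ≤ c := by
    rw [hcdef, ← ENNReal.ofReal_one]
    exact ENNReal.ofReal_le_ofReal (Real.one_le_exp hl)
  have hcpos : 0 < c := lt_of_lt_of_le zero_lt_one hc1
  have hc0 : c ≠ 0 := hcpos.ne'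
  have hctop : c ≠ ⊤ := ENNReal.ofReal_ne_top
  have hkey := key hl n Ω inferInstance μ (fun i => inferInstance) K d hdet A hAm
  rw [hK] at hkey
  have hlow : c ^ (M + 1) * Measure.pi μ C ≤ ∫⁻ y, eD c A y ∂Measure.pi μ := by
    have hpt : ∀ y, C.indicator (fun _ => c ^ (M + 1)) y ≤ eD c A y := by
      intro y
      by_cases hy : y ∈ C
      · rw [Set.indicator_of_mem hy]
        refine le_iInf fun a => ?_
        exact pow_le_pow_right₀ hc1 (hsep y hy a.1 a.2)
      · rw [Set.indicator_of_notMem hy]; exact zero_le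
    calc c ^ (M + 1) * Measure.pi μ C
        = ∫⁻ y, C.indicator (fun _ => c ^ (M + 1)) y ∂Measure.pi μ := by
          rw [lintegral_indicator hCm, setLIntegral_const]
    _ ≤ _ := lintegral_mono hpt
  have hchain : c ^ (M + 1) * (Measure.pi μ C * Measure.pi μ A) ≤ γ ^ k := by
    calc c ^ (M + 1) * (Measure.pi μ C * Measure.pi μ A)
        = (c ^ (M + 1) * Measure.pi μ C) * Measure.pi μ A := (mul_assoc _ _ _).symm
    _ ≤ (∫⁻ y, eD c A y ∂Measure.pi μ) * Measure.pi μ A := mul_le_mul_left hlow _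
    _ ≤ γ ^ k := hkey
  have hcast : γ ^ k * (n : ℝ≥0∞) ^ 6 ≤ c ^ (M + 1) := by
    have e1 : γ ^ k = ENNReal.ofReal (Real.exp (2 * l ^ 2) ^ k) := by
      rw [ENNReal.ofReal_pow (Real.exp_pos _).le, hγdef]
    have e2 : ((n : ℝ≥0∞)) ^ 6 = ENNReal.ofReal ((n:ℝ) ^ 6) := by
      rw [ENNReal.ofReal_pow (Nat.cast_nonneg n), ENNReal.ofReal_natCast]
    rw [e1, e2, ← ENNReal.ofReal_mul (by positivity), hcdef,
      ← ENNReal.ofReal_pow (Real.exp_pos _).le]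
    exact ENNReal.ofReal_le_ofReal hnum
  have hεε : ε * ε = (((n : ℝ≥0∞)) ^ 6)⁻¹ := by
    rw [hε, one_div, ← ENNReal.mul_inv (Or.inl (pow_ne_zero 3 hn0))
      (Or.inl (ENNReal.pow_ne_top hntop)), ← pow_add]
  have hup : γ ^ k ≤ c ^ (M + 1) * (ε * ε) := by
    rw [hεε]
    rw [← ENNReal.le_div_iff_mul_le (Or.inl (pow_ne_zero 6 hn0))
      (Or.inl (ENNReal.pow_ne_top hntop))] at hcast
    rwa [div_eq_mul_inv] at hcast
  have hltP : c ^ (M + 1) * (ε * ε) < c ^ (M + 1) * (Measure.pi μ C * Measure.pi μ A) := by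
    refine ENNReal.mul_lt_mul_right (pow_ne_zero _ hc0) (ENNReal.pow_ne_top hctop) ?_
    calc ε * ε < Measure.pi μ C * ε := ENNReal.mul_lt_mul_left hε0 hεtop hPC
    _ ≤ Measure.pi μ C * Measure.pi μ A := mul_le_mul_right hPA.le _
  exact absurd (hltP.trans_le (hchain.trans hup)) (lt_irrefl _)
end

section
/- Let k ≥ 1 and let (Ω_i, μ_i), for i = 1, …, k, be countable discrete probability spaces, and let μ be the product probability measure on Ω₁ × ⋯ × Ω_k. For a set U ⊆ Ω₁ × ⋯ × Ω_k and a real m ≥ 0, let B(U, m) be the set of all sequences that differ from some element of U in at most m coordinates. If 0 < α ≤ 1/2 and μ(U) > α, then μ(B(U, 8·√(k·ln(α⁻¹)))) ≥ 1 − α¹⁵. -/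
open MeasureTheory
open scoped ENNReal

/-- The Hamming-ball enlargement `B(U, m)`: all sequences differing from some
element of `U` in at most `m` coordinates. -/
def hammingBall {k : ℕ} {Ω : Fin k → Type*} (U : Set (∀ i, Ω i)) (m : ℝ) :
    Set (∀ i, Ω i) :=
  {x | ∃ y ∈ U, (({i | x i ≠ y i} : Set (Fin k)).ncard : ℝ) ≤ m}

section TalagrandAux
open Real

lemma aux_exp_neg_quad {l : ℝ} (hl : 0 ≤ l) : Real.exp (-l) ≤ 1 - l + l^2/2 := by
  have key : ∀ t : ℝ, HasDerivAt (fun t : ℝ => 1 - t + t^2/2 - Real.exp (-t))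
      (-1 + t + Real.exp (-t)) t := by
    intro t
    have h1 : HasDerivAt (fun t : ℝ => Real.exp (-t)) (-Real.exp (-t)) t := by
      simpa [Function.comp_def] using (Real.hasDerivAt_exp (-t)).comp t (hasDerivAt_neg t)
    have h2 : HasDerivAt (fun t : ℝ => 1 - t + t^2/2) (-1 + t) t := by
      have : HasDerivAt (fun t : ℝ => 1 - t + t^2/2) (0 - 1 + 2*t^(2-1)/2) t := by
        exact (((hasDerivAt_const t (1:ℝ)).sub (hasDerivAt_id t)).add
          ((hasDerivAt_pow 2 t).div_const 2))
      simpa using this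
    simpa [sub_eq_add_neg, Pi.add_def, Pi.neg_def] using h2.sub h1
  have mono : MonotoneOn (fun t : ℝ => 1 - t + t^2/2 - Real.exp (-t)) (Set.Ici 0) := by
    apply monotoneOn_of_deriv_nonneg (convex_Ici 0)
    · exact (Continuous.continuousOn (by continuity))
    · intro t ht
      simp only [interior_Ici, Set.mem_Ioi] at ht
      exact ((key t).differentiableAt).differentiableWithinAt
    · intro t ht
      simp only [interior_Ici, Set.mem_Ioi] at ht
      rw [(key t).deriv]
      nlinarith [Real.add_one_le_exp (-t)]
  have h0 := mono (Set.self_mem_Ici) (Set.mem_Ici.2 hl) hl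
  simp at h0
  nlinarith [h0]


lemma aux_log_quad {x : ℝ} (hx : 0 ≤ x) : x - x^2/2 ≤ Real.log (1+x) := by
  have key : ∀ t : ℝ, 0 < 1 + t → HasDerivAt (fun t : ℝ => Real.log (1+t) - t + t^2/2)
      (1/(1+t) - 1 + t) t := by
    intro t ht
    have h1 : HasDerivAt (fun t : ℝ => 1 + t) 1 t := by
      simpa [Pi.add_def] using (hasDerivAt_const t (1:ℝ)).add (hasDerivAt_id t)
    have h2 : HasDerivAt (fun t : ℝ => Real.log (1+t)) (1/(1+t)) t := by
      simpa using h1.log (ne_of_gt ht)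
    have h3 : HasDerivAt (fun t : ℝ => t^2/2) t t := by
      simpa using (hasDerivAt_pow 2 t).div_const 2
    simpa [Pi.add_def, Pi.sub_def] using (h2.sub (hasDerivAt_id t)).add h3
  have mono : MonotoneOn (fun t : ℝ => Real.log (1+t) - t + t^2/2) (Set.Ici 0) := by
    apply monotoneOn_of_deriv_nonneg (convex_Ici 0)
    · apply ContinuousOn.add (ContinuousOn.sub ?_ (continuous_id.continuousOn)) ?_
      · apply ContinuousOn.log (by fun_prop)
        intro t ht; simp only [Set.mem_Ici] at ht; positivity
      · fun_prop
    · intro t ht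
      simp only [interior_Ici, Set.mem_Ioi] at ht
      exact ((key t (by linarith)).differentiableAt).differentiableWithinAt
    · intro t ht
      simp only [interior_Ici, Set.mem_Ioi] at ht
      rw [(key t (by linarith)).deriv]
      have h1t : (0:ℝ) < 1 + t := by linarith
      have : 1/(1+t) - 1 + t = t^2/(1+t) := by field_simp; ring
      rw [this]
      positivity
  have h0 := mono (Set.self_mem_Ici) (Set.mem_Ici.2 hx) hx
  simp at h0
  nlinarith [h0]

lemma core_ineq {l : ℝ} (hl : 0 ≤ l) : Real.exp l ≤ Real.exp (l^2) * (2 - Real.exp (-l)) := by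
  have hu1 : Real.exp (-l) ≤ 1 := by
    rw [Real.exp_le_one_iff]; linarith
  have hu0 : 0 < Real.exp (-l) := Real.exp_pos _
  set x : ℝ := 1 - Real.exp (-l) with hxdef
  have hx0 : 0 ≤ x := by simp [hxdef]; linarith
  have hxl : x ≤ l := by
    have := Real.add_one_le_exp (-l); simp [hxdef]; linarith
  have hxq : l - l^2/2 ≤ x := by
    have := aux_exp_neg_quad hl; simp [hxdef]; linarith
  have hlog : x - x^2/2 ≤ Real.log (1+x) := aux_log_quad hx0
  have hpsi : l - l^2 ≤ Real.log (2 - Real.exp (-l)) := by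
    have h2 : (2:ℝ) - Real.exp (-l) = 1 + x := by simp [hxdef]; ring
    rw [h2]
    nlinarith [hlog, hxq, hxl, sq_nonneg x, sq_nonneg l]
  have h2pos : (0:ℝ) < 2 - Real.exp (-l) := by linarith
  calc Real.exp l = Real.exp (l^2) * Real.exp (l - l^2) := by
        rw [← Real.exp_add]; ring_nf
    _ ≤ Real.exp (l^2) * (2 - Real.exp (-l)) := by
        apply mul_le_mul_of_nonneg_left _ (le_of_lt (Real.exp_pos _))
        calc Real.exp (l - l^2) ≤ Real.exp (Real.log (2 - Real.exp (-l))) :=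
              Real.exp_le_exp.2 hpsi
          _ = 2 - Real.exp (-l) := Real.exp_log h2pos


lemma real_scalar {l s h P : ℝ} (hl : 0 ≤ l) (hs : 0 < s) (hsh : s ≤ h) (hh : h ≤ 1)
    (hP : 0 < P) :
    min (P / s) (Real.exp l * P / h) ≤ P * Real.exp (l^2) * (2*h - s) / (h*h) := by
  set u : ℝ := Real.exp (-l) with hudef
  have hu0 : 0 < u := Real.exp_pos _
  have hu1 : u ≤ 1 := by rw [hudef, Real.exp_le_one_iff]; linarith
  have huinv : u * Real.exp l = 1 := by
    rw [hudef, ← Real.exp_add]; simp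
  have hc0 : (0:ℝ) < Real.exp (l^2) := Real.exp_pos _
  have hcore : Real.exp l ≤ Real.exp (l^2) * (2 - u) := core_ineq hl
  have hh0 : (0:ℝ) < h := lt_of_lt_of_le hs hsh
  rcases le_total s (u*h) with hcase | hcase
  · -- use the right branch
    apply min_le_of_right_le
    rw [div_le_div_iff₀ hh0 (by positivity)]
    -- exp l * P * (h*h) ≤ P * exp(l^2) * (2h - s) * h
    have h1 : Real.exp (l^2) * (2 - u) * h ≤ Real.exp (l^2) * (2*h - s) := by
      nlinarith [hcase, hc0, hh0]
    have hA : Real.exp l * h ≤ Real.exp (l^2) * (2*h - s) := by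
      calc Real.exp l * h ≤ (Real.exp (l^2) * (2 - u)) * h :=
            mul_le_mul_of_nonneg_right hcore (le_of_lt hh0)
        _ ≤ Real.exp (l^2) * (2*h - s) := by nlinarith [h1]
      
    nlinarith [mul_le_mul_of_nonneg_right hA (by positivity : (0:ℝ) ≤ P*h)]
  · -- use the left branch
    apply min_le_of_left_le
    rw [div_le_div_iff₀ hs (by positivity)]
    -- P * (h*h) ≤ P * exp(l^2) * (2h - s) * s
    have hkey : 1 ≤ Real.exp (l^2) * (u * (2 - u)) := by
      nlinarith [mul_le_mul_of_nonneg_left hcore (le_of_lt hu0)]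
    have hmono : u*h*(2*h - u*h) ≤ s*(2*h - s) := by
      nlinarith [hcase, hsh, hh0, hu1, mul_le_mul_of_nonneg_right hu1 (le_of_lt hh0)]
    have h2 : h*h ≤ Real.exp (l^2) * (u*h*(2*h - u*h)) := by
      have : u*h*(2*h - u*h) = (u*(2-u))*(h*h) := by ring
      rw [this]
      nlinarith [hkey, hh0]
    have h3 : Real.exp (l^2) * (u*h*(2*h-u*h)) ≤ Real.exp (l^2) * (s*(2*h-s)) :=
      mul_le_mul_of_nonneg_left hmono (le_of_lt hc0)
    nlinarith [hP]

-- e^l ≤ 2 e^{l^2}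
lemma core_ineq2 {l : ℝ} (hl : 0 ≤ l) : Real.exp l ≤ 2 * Real.exp (l^2) := by
  have := core_ineq hl
  nlinarith [Real.exp_pos (-l), Real.exp_pos (l^2)]


lemma ennreal_quad {a H : ℝ≥0∞} (haH : a ≤ H) : (2*H - a) * a ≤ H * H := by
  have h1 : 2*H - a ≤ H + (H - a) := by
    rw [two_mul]; exact add_tsub_le_assoc
  calc (2*H - a)*a ≤ (H + (H - a))*a := mul_le_mul_left h1 a
    _ = H*a + (H-a)*a := by rw [add_mul]
    _ ≤ H*a + (H-a)*H := add_le_add_right (mul_le_mul_right haH _) _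
    _ = H*(a + (H - a)) := by rw [mul_comm (H-a) H, mul_add]
    _ = H*H := by rw [add_tsub_cancel_of_le haH]

lemma ennreal_min_bound {l P : ℝ} (hl : 0 ≤ l) (hP : 0 < P) {b H : ℝ≥0∞} (hbH : b ≤ H)
    (hH1 : H ≤ 1) (hH0 : H ≠ 0) :
    min (ENNReal.ofReal P / b) (ENNReal.ofReal (Real.exp l) * ENNReal.ofReal P / H)
      ≤ ENNReal.ofReal P * ENNReal.ofReal (Real.exp (l^2)) * (2*H - b) / (H*H) := by
  have hHtop : H ≠ ∞ := ne_top_of_le_ne_top ENNReal.one_ne_top hH1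
  have hbtop : b ≠ ∞ := ne_top_of_le_ne_top hHtop hbH
  set h : ℝ := H.toReal with hhdef
  have hh0 : 0 < h := ENNReal.toReal_pos hH0 hHtop
  have hh1 : h ≤ 1 := by
    rw [hhdef, ← ENNReal.toReal_one]; exact ENNReal.toReal_mono ENNReal.one_ne_top hH1
  have hHof : H = ENNReal.ofReal h := (ENNReal.ofReal_toReal hHtop).symm
  by_cases hb0 : b = 0
  · -- use right branch
    apply min_le_of_right_le
    rw [hb0, tsub_zero]
    have hrw : ENNReal.ofReal P * ENNReal.ofReal (Real.exp (l^2)) * (2*H) / (H*H)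
        = ENNReal.ofReal P * ENNReal.ofReal (Real.exp (l^2)) * 2 / H := by
      rw [show ENNReal.ofReal P * ENNReal.ofReal (Real.exp (l^2)) * (2*H)
            = (ENNReal.ofReal P * ENNReal.ofReal (Real.exp (l^2)) * 2) * H by ring]
      exact ENNReal.mul_div_mul_right _ _ hH0 hHtop
    rw [hrw]
    apply ENNReal.div_le_div_right
    calc ENNReal.ofReal (Real.exp l) * ENNReal.ofReal P
        ≤ (2 * ENNReal.ofReal (Real.exp (l^2))) * ENNReal.ofReal P := by
          apply mul_le_mul_left
          rw [← ENNReal.ofReal_ofNat, ← ENNReal.ofReal_mul (by norm_num)]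
          exact ENNReal.ofReal_le_ofReal (core_ineq2 hl)
      _ = ENNReal.ofReal P * ENNReal.ofReal (Real.exp (l^2)) * 2 := by ring
  · -- real case
    set s : ℝ := b.toReal with hsdef
    have hs0 : 0 < s := ENNReal.toReal_pos hb0 hbtop
    have hsh : s ≤ h := ENNReal.toReal_mono hHtop hbH
    have hbof : b = ENNReal.ofReal s := (ENNReal.ofReal_toReal hbtop).symm
    have hmono : Monotone ENNReal.ofReal := fun _ _ hx => ENNReal.ofReal_le_ofReal hx
    calc min (ENNReal.ofReal P / b) (ENNReal.ofReal (Real.exp l) * ENNReal.ofReal P / H)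
        = ENNReal.ofReal (min (P/s) (Real.exp l * P / h)) := by
          rw [hmono.map_min, hbof, hHof, ← ENNReal.ofReal_div_of_pos hs0,
            ← ENNReal.ofReal_mul (le_of_lt (Real.exp_pos l)),
            ← ENNReal.ofReal_div_of_pos hh0]
      _ ≤ ENNReal.ofReal (P * Real.exp (l^2) * (2*h - s) / (h*h)) :=
          ENNReal.ofReal_le_ofReal (real_scalar hl hs0 hsh hh1 hP)
      _ = ENNReal.ofReal P * ENNReal.ofReal (Real.exp (l^2)) * (2*H - b) / (H*H) := by
          rw [hbof, hHof, ENNReal.ofReal_div_of_pos (by positivity),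
            ENNReal.ofReal_mul (by positivity), ENNReal.ofReal_mul (by positivity),
            ENNReal.ofReal_sub _ (le_of_lt hs0), ENNReal.ofReal_mul (by norm_num),
            ENNReal.ofReal_mul (by positivity), ENNReal.ofReal_ofNat]


variable {k : ℕ} {Ω : Fin k → Type*}

/-- Hamming distance between two points. -/
noncomputable def hdist (x y : ∀ i, Ω i) : ℕ := ({i | x i ≠ y i} : Set (Fin k)).ncard

/-- Hamming distance from a point to a set. -/
noncomputable def sdist (U : Set (∀ i, Ω i)) (x : ∀ i, Ω i) : ℕ := sInf (hdist x '' U)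

lemma sdist_le {U : Set (∀ i, Ω i)} {y : ∀ i, Ω i} (hy : y ∈ U) (x : ∀ i, Ω i) :
    sdist U x ≤ hdist x y := Nat.sInf_le ⟨y, hy, rfl⟩

lemma exists_sdist {U : Set (∀ i, Ω i)} (hU : U.Nonempty) (x : ∀ i, Ω i) :
    ∃ y ∈ U, hdist x y = sdist U x := by
  have := Nat.sInf_mem (s := hdist x '' U) (hU.image _)
  obtain ⟨y, hy, hxy⟩ := this
  exact ⟨y, hy, hxy⟩

lemma sdist_eq_zero {U : Set (∀ i, Ω i)} {x : ∀ i, Ω i} (hx : x ∈ U) : sdist U x = 0 := by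
  have h := sdist_le hx x
  have : hdist x x = 0 := by simp [hdist]
  omega

section step
variable {n : ℕ} {Ω : Fin (n+1) → Type*}

lemma hdist_insertNth_same (ω : Ω 0) (z z' : ∀ j, Ω ((0 : Fin (n+1)).succAbove j)) :
    hdist (Fin.insertNth 0 ω z) (Fin.insertNth 0 ω z') ≤ hdist z z' := by
  unfold hdist
  have hsub : {i | Fin.insertNth 0 ω z i ≠ Fin.insertNth 0 ω z' i}
      ⊆ (Fin.succAbove 0) '' {j | z j ≠ z' j} := by
    intro i hi
    simp only [Set.mem_setOf_eq] at hi
    by_cases h0 : i = 0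
    · subst h0; simp [Fin.insertNth_apply_same] at hi
    · obtain ⟨j, rfl⟩ := Fin.exists_succAbove_eq h0
      rw [Fin.insertNth_apply_succAbove, Fin.insertNth_apply_succAbove] at hi
      exact ⟨j, hi, rfl⟩
  calc ({i | Fin.insertNth 0 ω z i ≠ Fin.insertNth 0 ω z' i} : Set (Fin (n+1))).ncard
      ≤ ((Fin.succAbove 0) '' {j | z j ≠ z' j}).ncard :=
        Set.ncard_le_ncard hsub (Set.toFinite _)
    _ = ({j | z j ≠ z' j} : Set (Fin n)).ncard :=
        Set.ncard_image_of_injective _ (Fin.succAbove_right_injective)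

lemma hdist_insertNth (ω ω' : Ω 0) (z z' : ∀ j, Ω ((0 : Fin (n+1)).succAbove j)) :
    hdist (Fin.insertNth 0 ω z) (Fin.insertNth 0 ω' z') ≤ hdist z z' + 1 := by
  unfold hdist
  have hsub : {i | Fin.insertNth 0 ω z i ≠ Fin.insertNth 0 ω' z' i}
      ⊆ insert (0 : Fin (n+1)) ((Fin.succAbove 0) '' {j | z j ≠ z' j}) := by
    intro i hi
    simp only [Set.mem_setOf_eq] at hi
    by_cases h0 : i = 0
    · subst h0; exact Set.mem_insert _ _
    · obtain ⟨j, rfl⟩ := Fin.exists_succAbove_eq h0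
      rw [Fin.insertNth_apply_succAbove, Fin.insertNth_apply_succAbove] at hi
      exact Set.mem_insert_of_mem _ ⟨j, hi, rfl⟩
  calc ({i | Fin.insertNth 0 ω z i ≠ Fin.insertNth 0 ω' z' i} : Set (Fin (n+1))).ncard
      ≤ (insert (0 : Fin (n+1)) ((Fin.succAbove 0) '' {j | z j ≠ z' j})).ncard :=
        Set.ncard_le_ncard hsub (Set.toFinite _)
    _ ≤ ((Fin.succAbove 0) '' {j | z j ≠ z' j}).ncard + 1 := Set.ncard_insert_le _ _
    _ = ({j | z j ≠ z' j} : Set (Fin n)).ncard + 1 := by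
        rw [Set.ncard_image_of_injective _ (Fin.succAbove_right_injective)]
end step

universe u
lemma mgf_bound : ∀ (k : ℕ) (Ω : Fin k → Type u) [∀ i, MeasurableSpace (Ω i)]
    [∀ i, DiscreteMeasurableSpace (Ω i)] [∀ i, Countable (Ω i)]
    (μ : ∀ i, Measure (Ω i)) [∀ i, IsProbabilityMeasure (μ i)]
    (U : Set (∀ i, Ω i)) (l : ℝ), 0 ≤ l →
    (∫⁻ x, ENNReal.ofReal (Real.exp (l * sdist U x)) ∂(Measure.pi μ)) * Measure.pi μ U
      ≤ ENNReal.ofReal (Real.exp (k * l^2)) := by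
  intro k
  induction k with
  | zero =>
    intro Ω _ _ _ μ _ U l hl
    have hs : ∀ x : (∀ i, Ω i), sdist U x = 0 := by
      intro x
      rcases U.eq_empty_or_nonempty with rfl | ⟨y, hy⟩
      · simp [sdist, hdist]
      · have h1 := sdist_le hy x
        have h2 : hdist x y = 0 := by
          have : ({i | x i ≠ y i} : Set (Fin 0)) = ∅ := Set.eq_empty_of_isEmpty _
          simp [hdist, this]
        omega
    simp only [hs, Nat.cast_zero, mul_zero, Real.exp_zero, ENNReal.ofReal_one,
      lintegral_one, measure_univ, one_mul, Nat.cast_zero, zero_mul]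
    exact prob_le_one
  | succ n ih =>
    intro Ω _ _ _ μ _ U l hl
    rcases U.eq_empty_or_nonempty with rfl | hUne
    · simp
    by_cases hμU0 : Measure.pi μ U = 0
    · rw [hμU0, mul_zero]; exact zero_le
    set ν : Measure (∀ j : Fin n, Ω ((0:Fin (n+1)).succAbove j)) :=
      Measure.pi (fun j => μ ((0:Fin (n+1)).succAbove j)) with hν
    haveI : IsProbabilityMeasure ν := by rw [hν]; infer_instance
    set e := MeasurableEquiv.piFinSuccAbove Ω 0 with he
    have mp : MeasurePreserving e (Measure.pi μ) ((μ 0).prod ν) :=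
      measurePreserving_piFinSuccAbove μ 0
    set Uo : Ω 0 → Set (∀ j : Fin n, Ω ((0:Fin (n+1)).succAbove j)) :=
      fun ω => {z | Fin.insertNth 0 ω z ∈ U} with hUo
    set U' : Set (∀ j : Fin n, Ω ((0:Fin (n+1)).succAbove j)) :=
      {z | ∃ ω, Fin.insertNth 0 ω z ∈ U} with hU'
    set E := ENNReal.ofReal (Real.exp (n * l^2)) with hE
    set K := ENNReal.ofReal (Real.exp (l^2)) with hK
    set L := ENNReal.ofReal (Real.exp l) with hL
    set H := ν U' with hH
    have hEne : E ≠ 0 := (ENNReal.ofReal_pos.2 (Real.exp_pos _)).ne'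
    set V : Set (Ω 0 × (∀ j : Fin n, Ω ((0:Fin (n+1)).succAbove j))) :=
      {p | Fin.insertNth 0 p.1 p.2 ∈ U} with hV
    have hVpre : ∀ ω, Prod.mk ω ⁻¹' V = Uo ω := fun ω => rfl
    have hepre : e ⁻¹' V = U := by
      ext x
      simp only [he, Set.mem_preimage, hV, Set.mem_setOf_eq,
        MeasurableEquiv.piFinSuccAbove_apply]
      rw [show ((Fin.insertNthEquiv Ω 0).symm x) = (x 0, Fin.removeNth 0 x) from rfl]
      rw [show Fin.insertNth 0 (x 0) (Fin.removeNth 0 x) = x from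
        Fin.insertNth_self_removeNth 0 x]
    have hmeasU : Measure.pi μ U = ((μ 0).prod ν) V := by
      rw [← mp.map_eq, MeasurableEquiv.map_apply, hepre]
    have hprod : ((μ 0).prod ν) V = ∫⁻ ω, ν (Uo ω) ∂(μ 0) := by
      rw [Measure.prod_apply MeasurableSet.of_discrete]
      simp only [hVpre]
    have hint : (∫⁻ x, ENNReal.ofReal (Real.exp (l * sdist U x)) ∂(Measure.pi μ))
        = ∫⁻ ω, ∫⁻ z, ENNReal.ofReal (Real.exp (l * sdist U (Fin.insertNth 0 ω z)))
            ∂ν ∂(μ 0) := by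
      calc (∫⁻ x, ENNReal.ofReal (Real.exp (l * sdist U x)) ∂(Measure.pi μ))
          = ∫⁻ x, (fun p : Ω 0 × (∀ j : Fin n, Ω ((0:Fin (n+1)).succAbove j)) =>
              ENNReal.ofReal (Real.exp (l * sdist U (Fin.insertNth 0 p.1 p.2)))) (e x)
              ∂(Measure.pi μ) := by
            apply lintegral_congr
            intro x
            congr 2
            rw [show (e x : Ω 0 × (∀ j : Fin n, Ω ((0:Fin (n+1)).succAbove j)))
                = (x 0, Fin.removeNth 0 x) from rfl]
            rw [show Fin.insertNth 0 (x 0) (Fin.removeNth 0 x) = x from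
              Fin.insertNth_self_removeNth 0 x]
        _ = ∫⁻ p, (fun p : Ω 0 × (∀ j : Fin n, Ω ((0:Fin (n+1)).succAbove j)) =>
              ENNReal.ofReal (Real.exp (l * sdist U (Fin.insertNth 0 p.1 p.2)))) p
              ∂((μ 0).prod ν) := by
            exact mp.lintegral_comp (f := fun p : Ω 0 × (∀ j : Fin n,
              Ω ((0:Fin (n+1)).succAbove j)) =>
              ENNReal.ofReal (Real.exp (l * sdist U (Fin.insertNth 0 p.1 p.2))))
              Measurable.of_discrete
        _ = ∫⁻ ω, ∫⁻ z, ENNReal.ofReal (Real.exp (l * sdist U (Fin.insertNth 0 ω z)))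
              ∂ν ∂(μ 0) := lintegral_prod _ (Measurable.of_discrete).aemeasurable
    have hU'ne : U'.Nonempty := by
      obtain ⟨x, hx⟩ := hUne
      refine ⟨Fin.removeNth 0 x, ⟨x 0, ?_⟩⟩
      rw [Fin.insertNth_self_removeNth 0 x]; exact hx
    have hHle : ∀ ω, ν (Uo ω) ≤ H := fun ω => measure_mono (fun z hz => ⟨ω, hz⟩)
    have hH1 : H ≤ 1 := prob_le_one
    have haH : Measure.pi μ U ≤ H := by
      rw [hmeasU, hprod]
      calc ∫⁻ ω, ν (Uo ω) ∂(μ 0) ≤ ∫⁻ _, H ∂(μ 0) := lintegral_mono hHle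
        _ = H := by simp
    have hH0 : H ≠ 0 := by
      intro h
      exact hμU0 (le_antisymm (h ▸ haH) zero_le)
    have hHtop : H ≠ ∞ := measure_ne_top _ _
    have hdiv : ∀ (W : Set (∀ j : Fin n, Ω ((0:Fin (n+1)).succAbove j))),
        (∫⁻ z, ENNReal.ofReal (Real.exp (l * sdist W z)) ∂ν) ≤ E / ν W := by
      intro W
      by_cases h0 : ν W = 0
      · rw [h0, ENNReal.div_zero hEne]; exact le_top
      · rw [ENNReal.le_div_iff_mul_le (Or.inl h0) (Or.inl (measure_ne_top _ _))]
        exact ih _ _ W l hl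
    have hinner : ∀ ω, (∫⁻ z, ENNReal.ofReal (Real.exp (l * sdist U (Fin.insertNth 0 ω z))) ∂ν)
        ≤ min (E / ν (Uo ω)) (L * E / H) := by
      intro ω
      refine le_min ?_ ?_
      · by_cases h0 : ν (Uo ω) = 0
        · rw [h0, ENNReal.div_zero hEne]; exact le_top
        · have hne : (Uo ω).Nonempty := by
            rcases (Uo ω).eq_empty_or_nonempty with h | h
            · exact absurd (by rw [h]; exact measure_empty) h0
            · exact h
          refine le_trans ?_ (hdiv (Uo ω))
          apply lintegral_mono
          intro z
          apply ENNReal.ofReal_le_ofReal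
          apply Real.exp_le_exp.2
          apply mul_le_mul_of_nonneg_left _ hl
          have key : sdist U (Fin.insertNth 0 ω z) ≤ sdist (Uo ω) z := by
            obtain ⟨z', hz', hz'eq⟩ := exists_sdist hne z
            calc sdist U (Fin.insertNth 0 ω z)
                ≤ hdist (Fin.insertNth 0 ω z) (Fin.insertNth 0 ω z') :=
                  sdist_le (show Fin.insertNth 0 ω z' ∈ U from hz') _
              _ ≤ hdist z z' := hdist_insertNth_same ω z z'
              _ = sdist (Uo ω) z := hz'eq
          exact_mod_cast key
      · calc (∫⁻ z, ENNReal.ofReal (Real.exp (l * sdist U (Fin.insertNth 0 ω z))) ∂ν)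
            ≤ ∫⁻ z, ENNReal.ofReal (Real.exp (l * ((sdist U' z : ℝ) + 1))) ∂ν := by
              apply lintegral_mono
              intro z
              apply ENNReal.ofReal_le_ofReal
              apply Real.exp_le_exp.2
              apply mul_le_mul_of_nonneg_left _ hl
              have key : sdist U (Fin.insertNth 0 ω z) ≤ sdist U' z + 1 := by
                obtain ⟨z', hz', hz'eq⟩ := exists_sdist hU'ne z
                obtain ⟨ω', hω'⟩ := hz'
                calc sdist U (Fin.insertNth 0 ω z)
                    ≤ hdist (Fin.insertNth 0 ω z) (Fin.insertNth 0 ω' z') := sdist_le hω' _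
                  _ ≤ hdist z z' + 1 := hdist_insertNth ω ω' z z'
                  _ = sdist U' z + 1 := by rw [hz'eq]
              push_cast
              exact_mod_cast key
          _ = L * ∫⁻ z, ENNReal.ofReal (Real.exp (l * sdist U' z)) ∂ν := by
              rw [← lintegral_const_mul L Measurable.of_discrete]
              apply lintegral_congr
              intro z
              rw [hL, ← ENNReal.ofReal_mul (le_of_lt (Real.exp_pos _)), ← Real.exp_add]
              congr 2
              ring
          _ ≤ L * (E / ν U') := mul_le_mul_right (hdiv U') L
          _ = L * E / H := by
              rw [hH, div_eq_mul_inv, div_eq_mul_inv, mul_assoc]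
    have hper : ∀ ω, (∫⁻ z, ENNReal.ofReal (Real.exp (l * sdist U (Fin.insertNth 0 ω z))) ∂ν)
        ≤ (E * K / (H*H)) * (2*H - ν (Uo ω)) := by
      intro ω
      calc _ ≤ min (E / ν (Uo ω)) (L * E / H) := hinner ω
        _ ≤ E * K * (2*H - ν (Uo ω)) / (H*H) := by
            rw [hE, hK, hL]
            exact ennreal_min_bound hl (Real.exp_pos _) (hHle ω) hH1 hH0
        _ = (E * K / (H*H)) * (2*H - ν (Uo ω)) := by
            rw [div_eq_mul_inv, div_eq_mul_inv]; ring
    have hsub : (∫⁻ ω, (2*H - ν (Uo ω)) ∂(μ 0)) = 2*H - Measure.pi μ U := by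
      have hg : Measurable fun ω => ν (Uo ω) := Measurable.of_discrete
      have hfin : (∫⁻ ω, ν (Uo ω) ∂(μ 0)) ≠ ∞ := by
        rw [← hprod, ← hmeasU]; exact measure_ne_top _ _
      have hbd : (fun ω => ν (Uo ω)) ≤ᶠ[ae (μ 0)] (fun _ => 2*H) := by
        apply Filter.Eventually.of_forall
        intro ω
        calc ν (Uo ω) ≤ H := hHle ω
          _ = 1 * H := (one_mul H).symm
          _ ≤ 2 * H := mul_le_mul_left one_le_two H
      rw [lintegral_sub hg hfin hbd, lintegral_const, measure_univ, mul_one,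
        ← hprod, ← hmeasU]
    calc (∫⁻ x, ENNReal.ofReal (Real.exp (l * sdist U x)) ∂(Measure.pi μ)) * Measure.pi μ U
        = (∫⁻ ω, ∫⁻ z, ENNReal.ofReal (Real.exp (l * sdist U (Fin.insertNth 0 ω z)))
            ∂ν ∂(μ 0)) * Measure.pi μ U := by rw [hint]
      _ ≤ (∫⁻ ω, (E * K / (H*H)) * (2*H - ν (Uo ω)) ∂(μ 0)) * Measure.pi μ U :=
          mul_le_mul_left (lintegral_mono hper) _
      _ = ((E * K / (H*H)) * (2*H - Measure.pi μ U)) * Measure.pi μ U := by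
          rw [lintegral_const_mul _ Measurable.of_discrete, hsub]
      _ = (E * K / (H*H)) * ((2*H - Measure.pi μ U) * Measure.pi μ U) := by ring
      _ ≤ (E * K / (H*H)) * (H*H) := mul_le_mul_right (ennreal_quad haH) _
      _ = E * K := ENNReal.div_mul_cancel (mul_ne_zero hH0 hH0)
          (ENNReal.mul_ne_top hHtop hHtop)
      _ = ENNReal.ofReal (Real.exp ((n+1 : ℕ) * l^2)) := by
          rw [hE, hK, ← ENNReal.ofReal_mul (le_of_lt (Real.exp_pos _)), ← Real.exp_add]
          congr 1
          push_cast
          ring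


end TalagrandAux

open Real in
/-- Talagrand-type enlargement bound: on a product of `k ≥ 1` countable
discrete probability spaces, if `μ(U) > α` with `0 < α ≤ 1/2`, then
`μ(B(U, 8·√(k·ln(α⁻¹)))) ≥ 1 - α¹⁵`. -/
theorem statement11 (k : ℕ) (hk : 1 ≤ k) {Ω : Fin k → Type*}
    [∀ i, MeasurableSpace (Ω i)] [∀ i, DiscreteMeasurableSpace (Ω i)]
    [∀ i, Countable (Ω i)]
    (μ : ∀ i, Measure (Ω i)) [∀ i, IsProbabilityMeasure (μ i)]
    (U : Set (∀ i, Ω i)) (α : ℝ) (hα0 : 0 < α) (hα : α ≤ 1 / 2)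
    (hU : ENNReal.ofReal α < Measure.pi μ U) :
    1 - ENNReal.ofReal (α ^ 15) ≤
      Measure.pi μ (hammingBall U (8 * Real.sqrt (k * Real.log α⁻¹))) := by
  classical
  have hαlt1 : α < 1 := lt_of_le_of_lt hα (by norm_num)
  have hlogα : Real.log α < 0 := Real.log_neg hα0 hαlt1
  have hLpos : 0 < Real.log α⁻¹ := by rw [Real.log_inv]; linarith
  have hk0 : (0:ℝ) < (k:ℝ) := by exact_mod_cast Nat.pos_of_ne_zero (by omega)
  set m := 8 * Real.sqrt (k * Real.log α⁻¹) with hm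
  have hm0 : 0 ≤ m := by positivity
  set l := m / (2*k) with hldef
  have hl : 0 ≤ l := by positivity
  have hUne : U.Nonempty := by
    rcases U.eq_empty_or_nonempty with rfl | h
    · rw [measure_empty] at hU; exact absurd hU (by simp)
    · exact h
  have hμU0 : Measure.pi μ U ≠ 0 := by
    intro h; rw [h] at hU; exact absurd hU (by simp)
  set S := hammingBall U m with hS
  have hmgf := mgf_bound k Ω μ U l hl
  have hintle : (∫⁻ x, ENNReal.ofReal (Real.exp (l * sdist U x)) ∂(Measure.pi μ))
      ≤ ENNReal.ofReal (Real.exp (k * l^2)) / Measure.pi μ U := by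
    rw [ENNReal.le_div_iff_mul_le (Or.inl hμU0) (Or.inl (measure_ne_top _ _))]
    exact hmgf
  have hmker : Sᶜ ⊆ {x | ENNReal.ofReal (Real.exp (l*m))
      ≤ ENNReal.ofReal (Real.exp (l * sdist U x))} := by
    intro x hx
    obtain ⟨y, hy, hxy⟩ := exists_sdist hUne x
    have hxS : ¬ ((hdist x y : ℝ) ≤ m) := fun hcon => hx ⟨y, hy, hcon⟩
    simp only [Set.mem_setOf_eq]
    apply ENNReal.ofReal_le_ofReal
    apply Real.exp_le_exp.2
    apply mul_le_mul_of_nonneg_left _ hl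
    rw [← hxy]
    exact le_of_lt (lt_of_not_ge hxS)
  have hε0 : (ENNReal.ofReal (Real.exp (l*m))) ≠ 0 :=
    (ENNReal.ofReal_pos.2 (Real.exp_pos _)).ne'
  have hmark := mul_meas_ge_le_lintegral₀ (μ := Measure.pi μ)
      (f := fun x => ENNReal.ofReal (Real.exp (l * sdist U x)))
      (Measurable.of_discrete).aemeasurable (ENNReal.ofReal (Real.exp (l*m)))
  have h1 : ENNReal.ofReal (Real.exp (l*m)) * Measure.pi μ Sᶜ
      ≤ ENNReal.ofReal (Real.exp (k * l^2)) / Measure.pi μ U :=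
    le_trans (mul_le_mul_right (measure_mono hmker) _) (le_trans hmark hintle)
  have hSc : Measure.pi μ Sᶜ
      ≤ ENNReal.ofReal (Real.exp (k*l^2 - l*m)) / Measure.pi μ U := by
    have h2 : Measure.pi μ Sᶜ ≤ (ENNReal.ofReal (Real.exp (k * l^2)) / Measure.pi μ U)
        / ENNReal.ofReal (Real.exp (l*m)) := by
      rw [ENNReal.le_div_iff_mul_le (Or.inl hε0) (Or.inl ENNReal.ofReal_ne_top),
        mul_comm]
      exact h1
    calc Measure.pi μ Sᶜ
        ≤ (ENNReal.ofReal (Real.exp (k * l^2)) / Measure.pi μ U)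
          / ENNReal.ofReal (Real.exp (l*m)) := h2
      _ = (ENNReal.ofReal (Real.exp (k * l^2)) / ENNReal.ofReal (Real.exp (l*m)))
          / Measure.pi μ U := by
          rw [div_eq_mul_inv, div_eq_mul_inv, div_eq_mul_inv, div_eq_mul_inv,
            mul_right_comm]
      _ = ENNReal.ofReal (Real.exp (k*l^2 - l*m)) / Measure.pi μ U := by
          rw [← ENNReal.ofReal_div_of_pos (Real.exp_pos _), ← Real.exp_sub]
  have hmsq : m^2 = 64 * (k * Real.log α⁻¹) := by
    rw [hm, mul_pow, Real.sq_sqrt (by positivity)]; norm_num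
  have hexp : k * l^2 - l * m = -(16 * Real.log α⁻¹) := by
    have h3 : k * l^2 - l*m = -(m^2/(4*k)) := by
      rw [hldef]; field_simp; ring
    rw [h3, hmsq]; field_simp; ring
  have hαpow : Real.exp (k*l^2 - l*m) = α^16 := by
    rw [hexp, Real.log_inv,
      show -(16 * -Real.log α) = ((16:ℕ):ℝ) * Real.log α by push_cast; ring,
      Real.exp_nat_mul, Real.exp_log hα0]
  have hSc2 : Measure.pi μ Sᶜ ≤ ENNReal.ofReal (α^15) := by
    calc Measure.pi μ Sᶜ
        ≤ ENNReal.ofReal (Real.exp (k*l^2 - l*m)) / Measure.pi μ U := hSc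
      _ ≤ ENNReal.ofReal (Real.exp (k*l^2 - l*m)) / ENNReal.ofReal α :=
          ENNReal.div_le_div_left (le_of_lt hU) _
      _ = ENNReal.ofReal (α^16 / α) := by
          rw [hαpow, ← ENNReal.ofReal_div_of_pos hα0]
      _ = ENNReal.ofReal (α^15) := by
          congr 1
          rw [pow_succ, mul_div_cancel_right₀ _ (ne_of_gt hα0)]
  have hadd : Measure.pi μ S + Measure.pi μ Sᶜ = 1 := by
    rw [measure_add_measure_compl MeasurableSet.of_discrete, measure_univ]
  rw [tsub_le_iff_right]
  calc (1:ℝ≥0∞) = Measure.pi μ S + Measure.pi μ Sᶜ := hadd.symm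
    _ ≤ Measure.pi μ S + ENNReal.ofReal (α^15) := add_le_add_right hSc2 _
end
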